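/- arXiv:1105.0474 — 3 statements merged into one kernel-verified Lean document; each statement's English description precedes it below -/
import Mathlib

section
/- Let d ≥ 2, let k ≥ 3 be an integer, and let H be chosen according to Σ(K_{n_1,…,n_d},k). Let E = E(H), let E' be the set of edges of H that share no vertex with any other edge of H, and let N = (∏_{j=1}^d n_j)^{1/d} and S = ∑_{j=1}^d n_j. Then: (1) E[|E|] = N^d / k^{d−1}; (2) E[|E'|] = (N^d / k^{d−1}) ((k−1)/k)^{S−d} ≥ (N^d / k^{d−1})(1 − S/k); (3) E[|E∖E'|] ≤ N^d S / k^d; and (4) for all η > 0, P(|E'| − E[|E'|] ≥ η E[|E'|]) ≤ 1/(η² E[|E'|]) + (1/η²)(((k−1)/(k−2))^{2d−1} − 1). -/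
open Finset MeasureTheory
open scoped Classical BigOperators

/-- An edge of the complete `d`-partite hyper-graph with color classes `[n 0], …, [n (d-1)]`. -/
abbrev Edge {d : ℕ} (n : Fin d → ℕ) := ∀ i : Fin d, Fin (n i)

/-- A `d`-partite hyper-graph, identified with its edge set. -/
abbrev HG {d : ℕ} (n : Fin d → ℕ) := Finset (Edge n)

/-- A finite set of edges is a non-crossing hyper-matching iff any two distinct edges of it
are strictly comparable in every coordinate (equivalently: pairwise node-disjoint and
totally ordered by the componentwise partial order). -/
def NonCrossing {d : ℕ} {n : Fin d → ℕ} (M : Finset (Edge n)) : Prop :=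
  ∀ e ∈ M, ∀ f ∈ M, e ≠ f → (∀ i, e i < f i) ∨ (∀ i, f i < e i)

/-- `L G` is the maximum size of a non-crossing hyper-matching contained in `G`. -/
noncomputable def L {d : ℕ} {n : Fin d → ℕ} (G : HG n) : ℕ :=
  (G.powerset.filter NonCrossing).sup Finset.card

/-- Expectation of `f` under the weight function `w` on a finite outcome type. -/
noncomputable def wExp {α : Type*} [Fintype α] (w : α → ℝ) (f : α → ℝ) : ℝ :=
  ∑ a, w a * f a

/-- Probability of the event `A` under the weight function `w`. -/
noncomputable def wProb {α : Type*} [Fintype α] (w : α → ℝ) (A : Set α) : ℝ :=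
  ∑ a ∈ Finset.univ.filter (· ∈ A), w a

/-- `m` is a median of the random variable `X` under the weights `w`. -/
def IsMedianW {α : Type*} [Fintype α] (w : α → ℝ) (X : α → ℝ) (m : ℝ) : Prop :=
  1 / 2 ≤ wProb w {a | X a ≤ m} ∧ 1 / 2 ≤ wProb w {a | m ≤ X a}

/-- The probability of the outcome `H` in the binomial model in which every element of `α`
is present independently with probability `p`. -/
noncomputable def binomW {α : Type*} [Fintype α] (p : ℝ) (H : Finset α) : ℝ :=
  ∏ a : α, if a ∈ H then p else 1 - p

/-- Weights of the uniform distribution on a finite type. -/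
noncomputable def unifW (α : Type*) [Fintype α] : α → ℝ := fun _ => (Fintype.card α : ℝ)⁻¹

/-- Geometric mean of the class sizes. -/
noncomputable def geoMean {d : ℕ} (n : Fin d → ℕ) : ℝ :=
  (∏ i, (n i : ℝ)) ^ (1 / (d : ℝ))

/-- Sum of the class sizes. -/
def sumSizes {d : ℕ} (n : Fin d → ℕ) : ℝ := ∑ i, (n i : ℝ)

/-- The outcome space of the random `d`-word model: an assignment of one of `k` letters
to every vertex. -/
abbrev WordOmega {d : ℕ} (n : Fin d → ℕ) (k : ℕ) := (Σ i : Fin d, Fin (n i)) → Fin k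

/-- The hyper-graph associated with a letter assignment: an edge is present iff all of its
vertices receive the same letter. -/
noncomputable def wordGraph {d : ℕ} {n : Fin d → ℕ} {k : ℕ} (ω : WordOmega n k) : HG n :=
  Finset.univ.filter (fun e : Edge n => ∀ i j : Fin d, ω ⟨i, e i⟩ = ω ⟨j, e j⟩)

/-- The set of edges of `H` sharing no vertex with any other edge of `H`. -/
noncomputable def isolated {d : ℕ} {n : Fin d → ℕ} (H : HG n) : HG n :=
  H.filter (fun e => ∀ f ∈ H, f ≠ e → ∀ i, e i ≠ f i)

/-- Length of a longest chain among the points `x 0, …, x (m-1)` of `ℝ^d` under the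
componentwise strict order. -/
noncomputable def cubeChain (d m : ℕ) (x : Fin m → Fin d → ℝ) : ℕ :=
  ((Finset.univ : Finset (Finset (Fin m))).filter
    (fun S => ∀ a ∈ S, ∀ b ∈ S, a ≠ b →
      (∀ i, x a i < x b i) ∨ (∀ i, x b i < x a i))).sup Finset.card

/-- The unit cube `[0,1]^d`, to the `m`-th power. -/
def unitCube (d m : ℕ) : Set (Fin m → Fin d → ℝ) := {x | ∀ a i, x a i ∈ Set.Icc (0 : ℝ) 1}

/-- `c` is the Bollobás–Winkler constant in dimension `d`:
`E[H_d(m)] / m^(1/d) → c` as `m → ∞`, where `H_d(m)` is the length of a longest chain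
among `m` independent uniform random points in the unit cube `[0,1]^d`. -/
def IsBWConstant (d : ℕ) (c : ℝ) : Prop :=
  Filter.Tendsto
    (fun m : ℕ => (∫ x in unitCube d m, (cubeChain d m x : ℝ)) / (m : ℝ) ^ (1 / (d : ℝ)))
    Filter.atTop (nhds c)

/-!
Both `|E|` and `|E'|` are sums of edge indicators. An edge is present iff its `d` vertices share
a letter, and it is isolated iff its vertex set is exactly one colour class of the assignment;
in the uniform model these events are products of independent per-vertex conditions, giving
the probabilities `k^{1-d}` and `k^{1-d} ((k-1)/k)^{S-d}`, and Bernoulli's inequality gives the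
bounds in terms of `S / k`. For the second moment, two isolated edges are equal or
vertex-disjoint, and two disjoint colour classes are nearly independent: the probability that
both occur exceeds the product by at most `((k-1)/(k-2))^{2d-1}`, because `k (k-2) ≤ (k-1)^2`.
Chebyshev's inequality then gives the concentration bound.
-/

section WeightedProbability

variable {α : Type*} [Fintype α] (w : α → ℝ)

lemma wExp_sub (f g : α → ℝ) :
    wExp w (fun a => f a - g a) = wExp w f - wExp w g := by
  simp only [wExp, mul_sub, Finset.sum_sub_distrib]

lemma wExp_sum_ite {β : Type*} [Fintype β] (P : α → β → Prop) [∀ a b, Decidable (P a b)] :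
    wExp w (fun a => ∑ b, if P a b then (1 : ℝ) else 0) = ∑ b, wProb w {a | P a b} := by
  simp only [wExp, wProb, Finset.mul_sum, mul_ite, mul_one, mul_zero, Finset.sum_filter,
    Set.mem_ofPred_eq]
  exact Finset.sum_comm

lemma natCast_card_eq_sum_ite {β : Type*} [Fintype β] (s : Finset β) :
    (s.card : ℝ) = ∑ b, if b ∈ s then (1 : ℝ) else 0 := by
  rw [Finset.card_eq_sum_ite (Finset.subset_univ s)]
  push_cast; rfl

lemma wExp_card {β : Type*} [Fintype β] (X : α → Finset β) :
    wExp w (fun a => ((X a).card : ℝ)) = ∑ b, wProb w {a | b ∈ X a} := by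
  simp only [natCast_card_eq_sum_ite]
  exact wExp_sum_ite w (fun a b => b ∈ X a)

lemma wExp_card_sq {β : Type*} [Fintype β] (X : α → Finset β) :
    wExp w (fun a => ((X a).card : ℝ) ^ 2) =
      ∑ b, ∑ b', wProb w {a | b ∈ X a ∧ b' ∈ X a} := by
  simp only [natCast_card_eq_sum_ite, sq, Finset.sum_mul_sum, ite_zero_mul_ite_zero, mul_one]
  simp only [← Fintype.sum_prod_type']
  exact wExp_sum_ite w (fun a (p : β × β) => p.1 ∈ X a ∧ p.2 ∈ X a)

lemma wProb_biUnion {ι : Type*} (I : Finset ι) (A : ι → Set α)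
    (hA : (I : Set ι).PairwiseDisjoint A) :
    wProb w (⋃ i ∈ I, A i) = ∑ i ∈ I, wProb w (A i) := by
  unfold wProb
  rw [← Finset.sum_biUnion]
  · congr 1; ext a; simp
  · intro i hi j hj hij
    simpa [Finset.disjoint_filter, Set.disjoint_left] using hA hi hj hij

lemma wProb_le_variance_div {X : α → ℝ} (hw : ∀ a, 0 ≤ w a) (hw1 : ∑ a, w a = 1) {t : ℝ}
    (ht : 0 < t) :
    wProb w {a | t ≤ X a - wExp w X} ≤ (wExp w (fun a => X a ^ 2) - wExp w X ^ 2) / t ^ 2 := by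
  set μ := wExp w X
  have hvar : wExp w (fun a => (X a - μ) ^ 2) = wExp w (fun a => X a ^ 2) - μ ^ 2 := by
    have : wExp w (fun a => (X a - μ) ^ 2) =
        wExp w (fun a => X a ^ 2) - 2 * μ * wExp w X + μ ^ 2 * ∑ a, w a := by
      simp only [wExp, Finset.mul_sum, ← Finset.sum_sub_distrib, ← Finset.sum_add_distrib]
      exact Finset.sum_congr rfl fun a _ => by ring
    rw [this, hw1]; ring
  rw [← hvar, le_div_iff₀ (by positivity), wProb, Finset.sum_mul]
  calc ∑ a ∈ Finset.univ.filter (· ∈ {a | t ≤ X a - μ}), w a * t ^ 2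
      ≤ ∑ a ∈ Finset.univ.filter (· ∈ {a | t ≤ X a - μ}), w a * (X a - μ) ^ 2 := by
        gcongr with a ha
        · exact hw a
        · simp only [Finset.mem_filter, Set.mem_ofPred_eq] at ha
          nlinarith [ha.2]
    _ ≤ wExp w (fun a => (X a - μ) ^ 2) :=
        Finset.sum_le_sum_of_subset_of_nonneg (Finset.filter_subset _ _)
          fun a _ _ => mul_nonneg (hw a) (sq_nonneg _)

lemma wProb_le_of_wExp_sq_le {X : α → ℝ} (hw : ∀ a, 0 ≤ w a) (hw1 : ∑ a, w a = 1) {C η : ℝ}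
    (hμ : 0 < wExp w X) (hX2 : wExp w (fun a => X a ^ 2) ≤ wExp w X + C * wExp w X ^ 2)
    (hη : 0 < η) :
    wProb w {a | η * wExp w X ≤ X a - wExp w X} ≤
      1 / (η ^ 2 * wExp w X) + 1 / η ^ 2 * (C - 1) := by
  calc _ ≤ (wExp w (fun a => X a ^ 2) - wExp w X ^ 2) / (η * wExp w X) ^ 2 :=
        wProb_le_variance_div w hw hw1 (by positivity)
    _ ≤ (wExp w X + C * wExp w X ^ 2 - wExp w X ^ 2) / (η * wExp w X) ^ 2 := by gcongr
    _ = _ := by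
        field_simp
        ring

end WeightedProbability

lemma unifW_nonneg (α : Type*) [Fintype α] (a : α) : 0 ≤ unifW α a := by
  unfold unifW
  positivity

lemma sum_unifW (α : Type*) [Fintype α] [Nonempty α] : ∑ a, unifW α a = 1 := by
  simp [unifW]

lemma wProb_unifW_forall_mem {X : Type*} [Fintype X] [DecidableEq X] {k : ℕ}
    (s : X → Finset (Fin k)) :
    wProb (unifW (X → Fin k)) {ω | ∀ x, ω x ∈ s x} = ∏ x, ((s x).card : ℝ) / k := by
  rw [Finset.prod_div_distrib, Finset.prod_const, Finset.card_univ, ← Nat.cast_prod,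
    ← Fintype.card_piFinset]
  simp only [wProb, unifW, Finset.sum_const, nsmul_eq_mul, Fintype.card_fun, Fintype.card_fin,
    Nat.cast_pow, div_eq_mul_inv]
  congr 3
  ext ω
  simp [Fintype.mem_piFinset]

lemma mul_one_div_pow_eq {K : ℝ} (hK : K ≠ 0) {t : ℕ} (ht : t ≠ 0) :
    K * (1 / K) ^ t = 1 / K ^ (t - 1) := by
  obtain ⟨t, rfl⟩ := Nat.exists_eq_succ_of_ne_zero ht
  rw [Nat.succ_sub_one, one_div_pow, pow_succ]
  field_simp

lemma mul_pow_le_div_pow_mul_pow {u w : ℝ} (hu : 0 ≤ u) (hw : 0 < w) (hwu : w ≤ u ^ 2)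
    (a m : ℕ) : u * w ^ a ≤ (u / w) ^ m * u ^ (2 * a + m + 1) := by
  have key : w ^ (a + m) ≤ (u ^ 2) ^ (a + m) := pow_le_pow_left₀ hw.le hwu _
  rw [div_pow, div_mul_eq_mul_div, le_div_iff₀ (pow_pos hw m)]
  calc u * w ^ a * w ^ m = u * w ^ (a + m) := by rw [mul_assoc, pow_add]
    _ ≤ u * (u ^ 2) ^ (a + m) := mul_le_mul_of_nonneg_left key hu
    _ = u ^ m * u ^ (2 * a + m + 1) := by ring

lemma geoMean_pow {d : ℕ} (hd : d ≠ 0) (n : Fin d → ℕ) : geoMean n ^ d = ∏ i, (n i : ℝ) := by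
  rw [geoMean, one_div, Real.rpow_inv_natCast_pow (by positivity) hd]

lemma sumSizes_sub_eq {d : ℕ} {n : Fin d → ℕ} (hn : ∀ i, 0 < n i) :
    sumSizes n - d = ((∑ i, n i - d : ℕ) : ℝ) := by
  have hd : d ≤ ∑ i, n i := by
    simpa using Finset.sum_le_sum (s := Finset.univ) fun i _ => Nat.one_le_iff_ne_zero.2 (hn i).ne'
  rw [Nat.cast_sub hd, sumSizes]
  push_cast
  rfl

lemma one_sub_div_le_pow {K : ℝ} (hK : 1 ≤ K) (s : ℕ) : 1 - s / K ≤ ((K - 1) / K) ^ s := by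
  have h := one_add_mul_le_pow (a := -(1 / K)) (by
    have : 1 / K ≤ 1 := (div_le_one (by linarith)).2 hK
    linarith) s
  rwa [show 1 + -(1 / K) = (K - 1) / K by field_simp; ring, mul_neg, mul_one_div,
    ← sub_eq_add_neg] at h

section Colorings

variable {X : Type*} {k : ℕ}

def IsMonochromatic (ω : X → Fin k) (T : Finset X) : Prop := ∃ c, ∀ x ∈ T, ω x = c

def IsColorClass (ω : X → Fin k) (T : Finset X) : Prop := ∃ c, ∀ x, ω x = c ↔ x ∈ T

lemma IsColorClass.eq_of_not_disjoint {ω : X → Fin k} {T T' : Finset X}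
    (h : IsColorClass ω T) (h' : IsColorClass ω T') (hTT' : ¬ Disjoint T T') : T = T' := by
  obtain ⟨c, hc⟩ := h
  obtain ⟨c', hc'⟩ := h'
  obtain ⟨x, hx, hx'⟩ := Finset.not_disjoint_iff.1 hTT'
  obtain rfl : c = c' := ((hc x).2 hx).symm.trans ((hc' x).2 hx')
  ext y
  rw [← hc y, ← hc' y]

variable [Fintype X] [DecidableEq X]

lemma prod_ite_mem_eq_pow {M : Type*} [CommMonoid M] (U : Finset X) (a b : M) :
    ∏ x, (if x ∈ U then a else b) = a ^ U.card * b ^ (Fintype.card X - U.card) := by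
  rw [Finset.prod_ite, Finset.prod_const, Finset.prod_const, Finset.filter_mem_eq_inter,
    Finset.univ_inter, Finset.filter_not, Finset.filter_mem_eq_inter, Finset.univ_inter,
    Finset.card_sdiff_of_subset (Finset.subset_univ U), Finset.card_univ]

lemma wProb_unifW_forall_mem_of_card (U : Finset X) (s : X → Finset (Fin k)) {b : ℝ}
    (hU : ∀ x ∈ U, (s x).card = 1) (hb : ∀ x ∉ U, ((s x).card : ℝ) = b) :
    wProb (unifW (X → Fin k)) {ω | ∀ x, ω x ∈ s x} =
      (1 / k) ^ U.card * (b / k) ^ (Fintype.card X - U.card) := by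
  rw [wProb_unifW_forall_mem, ← prod_ite_mem_eq_pow]
  refine Finset.prod_congr rfl fun x _ => ?_
  split_ifs with hx
  · rw [hU x hx, Nat.cast_one]
  · rw [hb x hx]

lemma wProb_exists_forall_mem {T : Finset X} (hT : T.Nonempty)
    (s : Fin k → X → Finset (Fin k)) (hsT : ∀ c, ∀ x ∈ T, s c x = {c}) {b : ℝ}
    (hb : ∀ c, ∀ x ∉ T, ((s c x).card : ℝ) = b) :
    wProb (unifW (X → Fin k)) {ω | ∃ c, ∀ x, ω x ∈ s c x} =
      k * (1 / k) ^ T.card * (b / k) ^ (Fintype.card X - T.card) := by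
  have hevent : {ω : X → Fin k | ∃ c, ∀ x, ω x ∈ s c x} =
      ⋃ c ∈ (Finset.univ : Finset (Fin k)), {ω | ∀ x, ω x ∈ s c x} := by
    ext ω
    simp
  rw [hevent, wProb_biUnion, Finset.sum_congr rfl fun c _ =>
    wProb_unifW_forall_mem_of_card T (s c) (fun x hx => by rw [hsT c x hx, Finset.card_singleton])
      (hb c), Finset.sum_const, Finset.card_univ, Fintype.card_fin, nsmul_eq_mul, mul_assoc]
  obtain ⟨x, hx⟩ := hT
  intro c _ c' _ hcc
  simp only [Function.onFun, Set.disjoint_left, Set.mem_ofPred_eq]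
  intro ω h h'
  have hc := h x
  have hc' := h' x
  rw [hsT c x hx, Finset.mem_singleton] at hc
  rw [hsT c' x hx, Finset.mem_singleton] at hc'
  exact hcc (hc.symm.trans hc')

lemma wProb_isMonochromatic (hk : 0 < k) {T : Finset X} (hT : T.Nonempty) :
    wProb (unifW (X → Fin k)) {ω | IsMonochromatic ω T} = 1 / (k : ℝ) ^ (T.card - 1) := by
  have hevent : {ω : X → Fin k | IsMonochromatic ω T} =
      {ω | ∃ c, ∀ x, ω x ∈ if x ∈ T then ({c} : Finset (Fin k)) else Finset.univ} := by
    ext ω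
    refine exists_congr fun c => forall_congr' fun x => ?_
    split_ifs <;> simp [*]
  have hk0 : (k : ℝ) ≠ 0 := Nat.cast_ne_zero.2 hk.ne'
  rw [hevent, wProb_exists_forall_mem hT _ (fun c x hx => if_pos hx) (b := k)
    (fun c x hx => by simp [hx]), div_self hk0, one_pow, mul_one,
    mul_one_div_pow_eq hk0 hT.card_ne_zero]

lemma wProb_isColorClass (hk : 0 < k) {T : Finset X} (hT : T.Nonempty) :
    wProb (unifW (X → Fin k)) {ω | IsColorClass ω T} =
      1 / (k : ℝ) ^ (T.card - 1) * (((k : ℝ) - 1) / k) ^ (Fintype.card X - T.card) := by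
  have hevent : {ω : X → Fin k | IsColorClass ω T} =
      {ω | ∃ c, ∀ x, ω x ∈ if x ∈ T then ({c} : Finset (Fin k)) else {c}ᶜ} := by
    ext ω
    refine exists_congr fun c => forall_congr' fun x => ?_
    split_ifs <;> simp [*]
  rw [hevent, wProb_exists_forall_mem hT _ (fun c x hx => if_pos hx) (b := k - 1)
    (fun c x hx => by simp [hx, Finset.card_compl, Nat.cast_sub hk]),
    mul_one_div_pow_eq (Nat.cast_ne_zero.2 hk.ne') hT.card_ne_zero]

lemma wProb_isColorClass_and (hk : 2 ≤ k) {T T' : Finset X} (hT : T.Nonempty)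
    (hT' : T'.Nonempty) (hTT' : Disjoint T T') :
    wProb (unifW (X → Fin k)) {ω | IsColorClass ω T ∧ IsColorClass ω T'} =
      k * (k - 1) * (1 / (k : ℝ)) ^ (T.card + T'.card) *
        (((k : ℝ) - 2) / k) ^ (Fintype.card X - (T.card + T'.card)) := by
  set s : Fin k × Fin k → X → Finset (Fin k) := fun p x =>
    if x ∈ T then {p.1} else if x ∈ T' then {p.2} else {p.1, p.2}ᶜ
  have hevent : {ω : X → Fin k | IsColorClass ω T ∧ IsColorClass ω T'} =
      ⋃ p ∈ (Finset.univ : Finset (Fin k)).offDiag, {ω | ∀ x, ω x ∈ s p x} := by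
    ext ω
    simp only [IsColorClass, s, Set.mem_ofPred_eq, Set.mem_iUnion, Finset.mem_offDiag,
      Finset.mem_univ, true_and, exists_prop, Prod.exists]
    constructor
    · rintro ⟨⟨c, hc⟩, ⟨c', hc'⟩⟩
      obtain ⟨x, hx⟩ := hT
      refine ⟨c, c', fun h => Finset.disjoint_left.1 hTT' hx ((hc' x).1 ?_), fun y => ?_⟩
      · rw [← h]; exact (hc x).2 hx
      · split_ifs with h1 h2
        · simpa using (hc y).2 h1
        · simpa using (hc' y).2 h2
        · simp [mt (hc y).1 h1, mt (hc' y).1 h2]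
    · rintro ⟨c, c', hcc, h⟩
      refine ⟨⟨c, fun y => ?_⟩, ⟨c', fun y => ?_⟩⟩ <;> have hy := h y <;>
        split_ifs at hy with h1 h2
      all_goals
        simp only [Finset.mem_singleton, Finset.mem_compl, Finset.mem_insert, not_or] at hy
        have := fun h : y ∈ T => Finset.disjoint_left.1 hTT' h
        grind
  have hpattern (p : Fin k × Fin k) (hp : p ∈ Finset.univ.offDiag) :
      wProb (unifW (X → Fin k)) {ω | ∀ x, ω x ∈ s p x} =
        (1 / (k : ℝ)) ^ (T.card + T'.card) *
          (((k : ℝ) - 2) / k) ^ (Fintype.card X - (T.card + T'.card)) := by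
    rw [wProb_unifW_forall_mem_of_card (b := k - 2) (T ∪ T') _ ?_ ?_,
      Finset.card_union_of_disjoint hTT']
    · intro x hx
      rcases Finset.mem_union.1 hx with h | h
      · simp [s, h]
      · simp [s, h, Finset.disjoint_right.1 hTT' h]
    · intro x hx
      rw [Finset.mem_offDiag] at hp
      rw [Finset.mem_union, not_or] at hx
      simp only [s, if_neg hx.1, if_neg hx.2]
      rw [Finset.card_compl, Finset.card_pair hp.2.2, Fintype.card_fin, Nat.cast_sub hk,
        Nat.cast_two]
  rw [hevent, wProb_biUnion, Finset.sum_congr rfl hpattern, Finset.sum_const,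
    Finset.offDiag_card, Finset.card_univ, Fintype.card_fin, nsmul_eq_mul,
    Nat.cast_sub (Nat.le_mul_self k)]
  · push_cast
    ring
  obtain ⟨x, hx⟩ := hT
  obtain ⟨x', hx'⟩ := hT'
  have hx'T : x' ∉ T := Finset.disjoint_right.1 hTT' hx'
  rintro ⟨c₁, c₁'⟩ _ ⟨c₂, c₂'⟩ _ hcc
  simp only [Function.onFun, Set.disjoint_left, Set.mem_ofPred_eq]
  intro ω h h'
  have h₁ := h x
  have h₂ := h' x
  have h₁' := h x'
  have h₂' := h' x'
  simp only [s, hx, hx', hx'T, if_true, if_false, Finset.mem_singleton] at h₁ h₂ h₁' h₂'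
  exact hcc (Prod.ext (h₁.symm.trans h₂) (h₁'.symm.trans h₂'))

lemma wProb_isColorClass_and_le (hk : 3 ≤ k) {T T' : Finset X} (hT : T.Nonempty)
    (hT' : T'.Nonempty) (hTT' : Disjoint T T') :
    wProb (unifW (X → Fin k)) {ω | IsColorClass ω T ∧ IsColorClass ω T'} ≤
      (((k : ℝ) - 1) / ((k : ℝ) - 2)) ^ (T.card + T'.card - 1) *
        wProb (unifW (X → Fin k)) {ω | IsColorClass ω T} *
        wProb (unifW (X → Fin k)) {ω | IsColorClass ω T'} := by
  have hN : T.card + T'.card ≤ Fintype.card X := by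
    rw [← Finset.card_union_of_disjoint hTT']; exact Finset.card_le_univ _
  obtain ⟨a, ha⟩ := Nat.exists_eq_add_of_le hN
  obtain ⟨m, hm⟩ : ∃ m, T.card + T'.card = m + 1 :=
    ⟨_, (Nat.succ_pred_eq_of_pos (Nat.add_pos_left hT.card_pos _)).symm⟩
  have hK : (3 : ℝ) ≤ k := by exact_mod_cast hk
  have hK0 : (k : ℝ) ≠ 0 := by positivity
  rw [wProb_isColorClass_and (by omega) hT hT' hTT', wProb_isColorClass (by omega) hT,
    wProb_isColorClass (by omega) hT', ← mul_one_div_pow_eq hK0 hT.card_ne_zero,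
    ← mul_one_div_pow_eq hK0 hT'.card_ne_zero, ha,
    show T.card + T'.card + a - (T.card + T'.card) = a by omega,
    show T.card + T'.card + a - T.card = a + T'.card by omega,
    show T.card + T'.card + a - T'.card = a + T.card by omega, hm, Nat.add_sub_cancel]
  set K : ℝ := (k : ℝ)
  -- `k (k - 2) ≤ (k - 1) ^ 2`, applied once for every vertex but one, is the only estimate
  have hKsq : (K - 2) / K ≤ ((K - 1) / K) ^ 2 := by
    rw [div_pow, div_le_div_iff₀ (by positivity) (by positivity)]
    nlinarith
  have key := mul_pow_le_div_pow_mul_pow (div_nonneg (by linarith) (by linarith))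
    (div_pos (by linarith) (by linarith)) hKsq a m
  rw [div_div_div_cancel_right₀ hK0] at key
  calc K * (K - 1) * (1 / K) ^ (m + 1) * ((K - 2) / K) ^ a
      = K ^ 2 * (1 / K) ^ (m + 1) * ((K - 1) / K * ((K - 2) / K) ^ a) := by
        field_simp
    _ ≤ K ^ 2 * (1 / K) ^ (m + 1) *
          (((K - 1) / (K - 2)) ^ m * ((K - 1) / K) ^ (2 * a + m + 1)) := by
        gcongr
    _ = _ := by
        rw [← hm, pow_add, show 2 * a + m + 1 = (a + T'.card) + (a + T.card) by omega, pow_add]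
        ring

end Colorings

section WordModel

variable {d : ℕ} {n : Fin d → ℕ} {k : ℕ}

def edgeVerts (e : Edge n) : Finset (Σ i : Fin d, Fin (n i)) :=
  Finset.univ.sigma fun i => {e i}

lemma mem_edgeVerts {e : Edge n} {x : Σ i : Fin d, Fin (n i)} :
    x ∈ edgeVerts e ↔ x.2 = e x.1 := by
  simp [edgeVerts]

lemma card_edgeVerts (e : Edge n) : (edgeVerts e).card = d := by
  simp [edgeVerts]

lemma edgeVerts_nonempty (hd : 0 < d) (e : Edge n) : (edgeVerts e).Nonempty :=
  Finset.card_pos.1 (by rw [card_edgeVerts]; exact hd)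

lemma edgeVerts_injective : Function.Injective (edgeVerts (n := n)) := fun e f h =>
  funext fun i =>
    mem_edgeVerts.1 (h ▸ mem_edgeVerts.2 rfl : (⟨i, e i⟩ : Σ i, Fin (n i)) ∈ edgeVerts f)

lemma mem_wordGraph_iff (hd : 0 < d) (ω : WordOmega n k) (e : Edge n) :
    e ∈ wordGraph ω ↔ IsMonochromatic ω (edgeVerts e) := by
  simp only [wordGraph, Finset.mem_filter, Finset.mem_univ, true_and, IsMonochromatic,
    mem_edgeVerts, Sigma.forall]
  constructor
  · intro h
    exact ⟨ω ⟨⟨0, hd⟩, e ⟨0, hd⟩⟩, fun i u hu => hu ▸ h i ⟨0, hd⟩⟩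
  · rintro ⟨c, hc⟩ i j
    rw [hc i _ rfl, hc j _ rfl]

lemma mem_isolated_iff (hd : 2 ≤ d) (ω : WordOmega n k) (e : Edge n) :
    e ∈ isolated (wordGraph ω) ↔ IsColorClass ω (edgeVerts e) := by
  simp only [isolated, Finset.mem_filter, mem_wordGraph_iff (by omega : 0 < d)]
  constructor
  · -- a vertex `u ≠ e i` of the colour of `e` would give the edge `e[i ↦ u]`, meeting `e`
    -- in every other class
    rintro ⟨⟨c, hc⟩, hiso⟩
    refine ⟨c, fun ⟨i, u⟩ => ⟨fun hu => ?_, hc _⟩⟩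
    rw [mem_edgeVerts]
    by_contra hne
    have : Nontrivial (Fin d) := Fin.nontrivial_iff_two_le.2 hd
    obtain ⟨j, hj⟩ := exists_ne i
    refine hiso (Function.update e i u) ⟨c, fun ⟨l, v⟩ hv => ?_⟩ ?_ j ?_
    · rw [mem_edgeVerts] at hv
      by_cases hl : l = i
      · subst hl
        rw [Function.update_self] at hv
        subst hv
        exact hu
      · rw [Function.update_of_ne hl] at hv
        exact hc _ (mem_edgeVerts.2 hv)
    · intro h
      exact hne (by rw [← h, Function.update_self])
    · rw [Function.update_of_ne hj]
  · rintro ⟨c, hc⟩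
    refine ⟨⟨c, fun x hx => (hc x).2 hx⟩, fun f ⟨c', hc'⟩ hfe i hef => hfe (funext fun j => ?_)⟩
    have hc'c : c' = c := by
      rw [← hc' ⟨i, f i⟩ (mem_edgeVerts.2 rfl), ← hef]
      exact (hc _).2 (mem_edgeVerts.2 rfl)
    exact mem_edgeVerts.1 ((hc ⟨j, f j⟩).1 (hc'c ▸ hc' _ (mem_edgeVerts.2 rfl)))

lemma natCast_card_edge : (Fintype.card (Edge n) : ℝ) = ∏ i, (n i : ℝ) := by
  simp [Fintype.card_pi]

lemma wExp_card_wordGraph (hd : 0 < d) (hk : 0 < k) :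
    wExp (unifW (WordOmega n k)) (fun ω => ((wordGraph ω).card : ℝ)) =
      (∏ i, (n i : ℝ)) / (k : ℝ) ^ (d - 1) := by
  rw [wExp_card]
  simp_rw [mem_wordGraph_iff hd]
  rw [Finset.sum_congr rfl fun e _ => wProb_isMonochromatic hk (edgeVerts_nonempty hd e)]
  simp only [card_edgeVerts, Finset.sum_const, Finset.card_univ, nsmul_eq_mul, natCast_card_edge]
  ring

lemma wProb_mem_isolated (hd : 2 ≤ d) (hk : 0 < k) (e : Edge n) :
    wProb (unifW (WordOmega n k)) {ω | e ∈ isolated (wordGraph ω)} =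
      1 / (k : ℝ) ^ (d - 1) * (((k : ℝ) - 1) / k) ^ (∑ i, n i - d) := by
  simp_rw [mem_isolated_iff hd]
  rw [wProb_isColorClass hk (edgeVerts_nonempty (by omega) e), card_edgeVerts,
    Fintype.card_sigma]
  simp

lemma wExp_card_isolated (hd : 2 ≤ d) (hk : 0 < k) :
    wExp (unifW (WordOmega n k)) (fun ω => ((isolated (wordGraph ω)).card : ℝ)) =
      (∏ i, (n i : ℝ)) / (k : ℝ) ^ (d - 1) * (((k : ℝ) - 1) / k) ^ (∑ i, n i - d) := by
  rw [wExp_card, Finset.sum_congr rfl fun e _ => wProb_mem_isolated hd hk e]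
  simp only [Finset.sum_const, Finset.card_univ, nsmul_eq_mul, natCast_card_edge]
  ring

lemma wExp_card_sdiff_isolated :
    wExp (unifW (WordOmega n k)) (fun ω => ((wordGraph ω \ isolated (wordGraph ω)).card : ℝ)) =
      wExp (unifW (WordOmega n k)) (fun ω => ((wordGraph ω).card : ℝ)) -
        wExp (unifW (WordOmega n k)) (fun ω => ((isolated (wordGraph ω)).card : ℝ)) := by
  rw [← wExp_sub]
  congr 1
  ext ω
  have hsub : isolated (wordGraph ω) ⊆ wordGraph ω := Finset.filter_subset _ _
  rw [Finset.card_sdiff_of_subset hsub, Nat.cast_sub (Finset.card_le_card hsub)]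

lemma wProb_mem_isolated_and_le (hd : 2 ≤ d) (hk : 3 ≤ k) (e f : Edge n) :
    wProb (unifW (WordOmega n k)) {ω | e ∈ isolated (wordGraph ω) ∧ f ∈ isolated (wordGraph ω)} ≤
      (if e = f then wProb (unifW (WordOmega n k)) {ω | e ∈ isolated (wordGraph ω)} else 0) +
        (((k : ℝ) - 1) / ((k : ℝ) - 2)) ^ (2 * d - 1) *
          wProb (unifW (WordOmega n k)) {ω | e ∈ isolated (wordGraph ω)} ^ 2 := by
  have hC : 0 ≤ (((k : ℝ) - 1) / ((k : ℝ) - 2)) ^ (2 * d - 1) *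
      wProb (unifW (WordOmega n k)) {ω | e ∈ isolated (wordGraph ω)} ^ 2 := by
    have : (3 : ℝ) ≤ k := by exact_mod_cast hk
    exact mul_nonneg (pow_nonneg (div_nonneg (by linarith) (by linarith)) _) (sq_nonneg _)
  by_cases hef : e = f
  · subst hef
    simp only [and_self, if_true]
    linarith
  rw [if_neg hef, zero_add]
  by_cases hdisj : Disjoint (edgeVerts e) (edgeVerts f)
  · have hpf : wProb (unifW (WordOmega n k)) {ω | f ∈ isolated (wordGraph ω)} =
        wProb (unifW (WordOmega n k)) {ω | e ∈ isolated (wordGraph ω)} := by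
      rw [wProb_mem_isolated hd (by omega), wProb_mem_isolated hd (by omega)]
    have h := wProb_isColorClass_and_le hk (edgeVerts_nonempty (by omega) e)
      (edgeVerts_nonempty (by omega) f) hdisj
    simp_rw [← mem_isolated_iff hd] at h
    rwa [card_edgeVerts, card_edgeVerts, ← two_mul, hpf, mul_assoc, ← sq] at h
  · have hempty : {ω : WordOmega n k | e ∈ isolated (wordGraph ω) ∧ f ∈ isolated (wordGraph ω)} =
        ∅ := by
      ext ω
      simp only [mem_isolated_iff hd, Set.mem_ofPred_eq, Set.mem_empty_iff_false, iff_false]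
      exact fun ⟨he, hf⟩ => hef (edgeVerts_injective (he.eq_of_not_disjoint hf hdisj))
    simpa [hempty, wProb] using hC

lemma wExp_card_isolated_sq_le (hd : 2 ≤ d) (hk : 3 ≤ k) :
    wExp (unifW (WordOmega n k)) (fun ω => ((isolated (wordGraph ω)).card : ℝ) ^ 2) ≤
      wExp (unifW (WordOmega n k)) (fun ω => ((isolated (wordGraph ω)).card : ℝ)) +
        (((k : ℝ) - 1) / ((k : ℝ) - 2)) ^ (2 * d - 1) *
          wExp (unifW (WordOmega n k)) (fun ω => ((isolated (wordGraph ω)).card : ℝ)) ^ 2 := by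
  set p : ℝ := 1 / (k : ℝ) ^ (d - 1) * (((k : ℝ) - 1) / k) ^ (∑ i, n i - d)
  set C : ℝ := (((k : ℝ) - 1) / ((k : ℝ) - 2)) ^ (2 * d - 1)
  have hp (e : Edge n) : wProb (unifW (WordOmega n k)) {ω | e ∈ isolated (wordGraph ω)} = p :=
    wProb_mem_isolated hd (by omega) e
  have hμ : wExp (unifW (WordOmega n k)) (fun ω => ((isolated (wordGraph ω)).card : ℝ)) =
      Fintype.card (Edge n) * p := by
    simp only [wExp_card, hp, Finset.sum_const, Finset.card_univ, nsmul_eq_mul]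
  rw [wExp_card_sq, hμ]
  calc ∑ e, ∑ f, wProb (unifW (WordOmega n k))
        {ω | e ∈ isolated (wordGraph ω) ∧ f ∈ isolated (wordGraph ω)}
      ≤ ∑ e : Edge n, ∑ f : Edge n, ((if e = f then p else 0) + C * p ^ 2) := by
        gcongr with e _ f _
        simpa only [hp] using wProb_mem_isolated_and_le hd hk e f
    _ = Fintype.card (Edge n) * p + C * (Fintype.card (Edge n) * p) ^ 2 := by
        simp only [Finset.sum_add_distrib, Finset.sum_ite_eq, Finset.mem_univ, if_true,
          Finset.sum_const, Finset.card_univ, nsmul_eq_mul]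
        ring

end WordModel

/-- Expectations of `|E|`, `|E'|` and `|E ∖ E'|` for the random `d`-word model, and a
Chebyshev-type bound for `|E'|`. -/
theorem word_edge_counts (d : ℕ) (hd : 2 ≤ d) (k : ℕ) (hk : 3 ≤ k)
    (n : Fin d → ℕ) (hn : ∀ i, 0 < n i) :
    let N : ℝ := geoMean n
    let S : ℝ := sumSizes n
    let muE : ℝ := wExp (unifW (WordOmega n k)) (fun ω => ((wordGraph ω).card : ℝ))
    let muE' : ℝ :=
      wExp (unifW (WordOmega n k)) (fun ω => ((isolated (wordGraph ω)).card : ℝ))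
    muE = N ^ d / (k : ℝ) ^ (d - 1) ∧
    (muE' = N ^ d / (k : ℝ) ^ (d - 1) * (((k : ℝ) - 1) / (k : ℝ)) ^ (S - (d : ℝ)) ∧
      N ^ d / (k : ℝ) ^ (d - 1) * (1 - S / (k : ℝ)) ≤ muE') ∧
    wExp (unifW (WordOmega n k))
        (fun ω => ((wordGraph ω \ isolated (wordGraph ω)).card : ℝ)) ≤
      N ^ d * S / (k : ℝ) ^ d ∧
    ∀ η : ℝ, 0 < η →
      wProb (unifW (WordOmega n k))
          {ω | η * muE' ≤ ((isolated (wordGraph ω)).card : ℝ) - muE'} ≤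
        1 / (η ^ 2 * muE') +
          1 / η ^ 2 * ((((k : ℝ) - 1) / ((k : ℝ) - 2)) ^ (2 * d - 1) - 1) := by
  intro N S muE muE'
  have hK : (3 : ℝ) ≤ k := by exact_mod_cast hk
  set s := ∑ i, n i - d
  have hNd : N ^ d = ∏ i, (n i : ℝ) := geoMean_pow (by omega) n
  have hA : 0 < N ^ d / (k : ℝ) ^ (d - 1) := by
    rw [hNd]
    exact div_pos (Finset.prod_pos fun i _ => Nat.cast_pos.2 (hn i)) (by positivity)
  have hE : muE = N ^ d / (k : ℝ) ^ (d - 1) := hNd ▸ wExp_card_wordGraph (by omega) (by omega)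
  have hE' : muE' = N ^ d / (k : ℝ) ^ (d - 1) * (((k : ℝ) - 1) / k) ^ s :=
    hNd ▸ wExp_card_isolated hd (by omega)
  have hbern : 1 - (s : ℝ) / k ≤ (((k : ℝ) - 1) / k) ^ s := one_sub_div_le_pow (by linarith) s
  have hsS : (s : ℝ) / k ≤ S / k := by
    gcongr
    linarith [sumSizes_sub_eq hn, (Nat.cast_nonneg d : (0 : ℝ) ≤ d)]
  refine ⟨hE, ⟨by rw [hE', sumSizes_sub_eq hn, Real.rpow_natCast], ?_⟩, ?_, fun η hη => ?_⟩
  · rw [hE']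
    gcongr
    linarith
  · calc _ = muE - muE' := wExp_card_sdiff_isolated
      _ = N ^ d / (k : ℝ) ^ (d - 1) * (1 - (((k : ℝ) - 1) / k) ^ s) := by rw [hE, hE']; ring
      _ ≤ N ^ d / (k : ℝ) ^ (d - 1) * (S / k) := by gcongr; linarith
      _ = N ^ d * S / (k : ℝ) ^ d := by
          rw [div_mul_div_comm, ← pow_succ, Nat.sub_add_cancel (by omega)]
  · have : Nonempty (WordOmega n k) := ⟨fun _ => ⟨0, by omega⟩⟩
    have hμ : 0 < muE' := by
      rw [hE']
      exact mul_pos hA (pow_pos (div_pos (by linarith) (by linarith)) _)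
    exact wProb_le_of_wExp_sq_le _ (unifW_nonneg _) (sum_unifW _) hμ
      (wExp_card_isolated_sq_le hd hk) hη
end

section
/- The symmetric binomial random graph model has concentration constant 1/4: if G is chosen according to S(K_{n,n},p) and Med is any median of L(G), then for all s ≥ 0, P(L(G) ≤ (1−s)Med) ≤ 2 exp(−s² Med /4) and P(L(G) ≥ (1+s)Med) ≤ 2 exp(−(s²/(1+s)) Med /4). -/
open Finset
open scoped Classical BigOperators

/-- A bipartite graph on color classes `[n]`, `[n]`, identified with its edge set. -/
abbrev BG (n : ℕ) := Finset (Fin n × Fin n)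

/-- A finite set of edges is a non-crossing matching iff any two distinct edges of it are
strictly increasing in both coordinates (equivalently: pairwise node-disjoint and totally
ordered by the componentwise partial order). -/
def BNonCrossing {n : ℕ} (M : BG n) : Prop :=
  ∀ e ∈ M, ∀ f ∈ M, e ≠ f → (e.1 < f.1 ∧ e.2 < f.2) ∨ (f.1 < e.1 ∧ f.2 < e.2)

/-- `BL G` is the maximum size of a non-crossing matching contained in `G`. -/
noncomputable def BL {n : ℕ} (G : BG n) : ℕ :=
  (G.powerset.filter BNonCrossing).sup Finset.card

/-- The index set of the symmetric binomial model: pairs `(i,j)` with `i < j`. -/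
abbrev SymPairs (n : ℕ) := {q : Fin n × Fin n // q.1 < q.2}

/-- Outcomes of the symmetric binomial model: the chosen set of pairs. -/
abbrev SymOmega (n : ℕ) := Finset (SymPairs n)

/-- The bipartite graph determined by an outcome of the symmetric binomial model:
for every chosen pair `(i,j)` (with `i < j`) both edges `(i,j)` and `(j,i)` are present. -/
noncomputable def symGraph {n : ℕ} (F : SymOmega n) : BG n :=
  F.image (fun q => q.1) ∪ F.image (fun q => (q.1.2, q.1.1))

/-- The bipartite graph determined by an outcome of the oriented symmetric binomial model:
only the edges `(i,j)` with `i < j` are present. -/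
noncomputable def orientGraph {n : ℕ} (F : SymOmega n) : BG n := F.image (fun q => q.1)

/-- The index set of the anti-symmetric binomial model on `[2n] × [2n]`: the pair of edges
`{(i,j), (2n+1-i, 2n+1-j)}` is represented by its member whose first coordinate lies in
the first half. -/
abbrev AsymPairs (n : ℕ) := {q : Fin (2 * n) × Fin (2 * n) // (q.1.1 : ℕ) < n}

/-- Outcomes of the anti-symmetric binomial model. -/
abbrev AsymOmega (n : ℕ) := Finset (AsymPairs n)

/-- The bipartite graph determined by an outcome of the anti-symmetric binomial model:
for every chosen representative `(i,j)`, the edges `(i,j)` and `(2n+1-i, 2n+1-j)`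
are present. -/
noncomputable def asymGraph {n : ℕ} (F : AsymOmega n) : BG (2 * n) :=
  F.image (fun q => q.1) ∪ F.image (fun q => (q.1.1.rev, q.1.2.rev))

/-- The set of edges of `G` sharing no vertex with any other edge of `G`. -/
noncomputable def bIsolated {n : ℕ} (G : BG n) : BG n :=
  G.filter (fun e => ∀ f ∈ G, f ≠ e → e.1 ≠ f.1 ∧ e.2 ≠ f.2)

/-- `E[L(S(K_{n,n},p))]`, the expected maximum size of a non-crossing matching in the
symmetric binomial random graph model. -/
noncomputable def symLExp (n : ℕ) (p : ℝ) : ℝ :=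
  wExp (binomW p : SymOmega n → ℝ) (fun F => (BL (symGraph F) : ℝ))

/-- `E[L(A(K_{2n,2n},p))]`, the expected maximum size of a non-crossing matching in the
anti-symmetric binomial random graph model. -/
noncomputable def asymLExp (n : ℕ) (p : ℝ) : ℝ :=
  wExp (binomW p : AsymOmega n → ℝ) (fun F => (BL (asymGraph F) : ℝ))



/-!
Talagrand's convex distance inequality for the product Bernoulli measure on the subsets of a
finite set says that `E[exp (d_T(A, ·)² / 4)] * P(A) ≤ 1` for every nonempty family `A`. It is
proved by induction on the set of coordinates: splitting `A` along one coordinate `i`, the convex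
distance to `A` is controlled by convex combinations of the distances to the projection of `A`
and to the fibre of `A` over the value of `i`, and Hölder's inequality turns this into the bound.

If `f` is 1-Lipschitz and `f`-certifiable, a linear functional supported on the certificate of
`ω` and Cauchy–Schwarz give `d_T({f ≤ a}, ω)² ≥ (f ω - a)² / f ω`, hence
`P(f ≤ a) * P(f ≥ b) ≤ exp (-(b - a)² / (4 b))`; putting a median for `a` or `b` gives both tails.
The size of a maximum non-crossing matching `M` of the symmetric random graph is certifiable by
the pairs of the outcome that `M` uses: distinct edges of a non-crossing matching have distinct
smaller endpoints, so `M` never uses both `(i, j)` and `(j, i)`.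
-/

open Real

section WeightedProbability

variable {α : Type*} [Fintype α]

theorem wProb_empty (w : α → ℝ) : wProb w ∅ = 0 := by
  simp [wProb]

theorem mul_wProb_le_wExp {w f : α → ℝ} {S : Set α} {c : ℝ} (hw : ∀ a, 0 ≤ w a)
    (hf : ∀ a, 0 ≤ f a) (hS : ∀ a ∈ S, c ≤ f a) : c * wProb w S ≤ wExp w f := by
  rw [wProb, mul_sum]
  calc ∑ a ∈ univ.filter (· ∈ S), c * w a ≤ ∑ a ∈ univ.filter (· ∈ S), w a * f a :=
        sum_le_sum fun a ha => by
          rw [mul_comm]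
          exact mul_le_mul_of_nonneg_left (hS a (mem_filter.1 ha).2) (hw a)
    _ ≤ wExp w f :=
        sum_le_sum_of_subset_of_nonneg (filter_subset _ _) fun a _ _ => mul_nonneg (hw a) (hf a)

theorem IsMedianW.nonneg {w X : α → ℝ} {m : ℝ} (hm : IsMedianW w X m) (hX : ∀ a, 0 ≤ X a) :
    0 ≤ m := by
  by_contra! h
  have hempty : {a | X a ≤ m} = ∅ :=
    Set.eq_empty_of_forall_notMem fun a ha => (hX a).not_gt (lt_of_le_of_lt ha h)
  linarith [hempty ▸ hm.1, wProb_empty w]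

end WeightedProbability

namespace Talagrand

section BinomialWeight

variable {ι : Type*} {p : ℝ} {s : Finset ι} {i : ι}

noncomputable def binomWOn (p : ℝ) (s ω : Finset ι) : ℝ :=
  ∏ j ∈ s, if j ∈ ω then p else 1 - p

theorem binomWOn_nonneg (hp0 : 0 ≤ p) (hp1 : p ≤ 1) (s ω : Finset ι) : 0 ≤ binomWOn p s ω :=
  prod_nonneg fun j _ => by split_ifs <;> linarith

theorem binomWOn_congr {ω ω' : Finset ι} (h : ∀ j ∈ s, j ∈ ω ↔ j ∈ ω') :
    binomWOn p s ω = binomWOn p s ω' :=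
  prod_congr rfl fun j hj => by simp only [h j hj]

theorem binomWOn_insert (his : i ∉ s) (ω : Finset ι) :
    binomWOn p (insert i s) ω = (if i ∈ ω then p else 1 - p) * binomWOn p s ω :=
  prod_insert his

theorem binomWOn_insert_self (his : i ∉ s) (ω : Finset ι) :
    binomWOn p s (insert i ω) = binomWOn p s ω :=
  binomWOn_congr fun j hj => by rw [mem_insert, or_iff_right (ne_of_mem_of_not_mem hj his)]

theorem binomWOn_erase (his : i ∉ s) (ω : Finset ι) :
    binomWOn p s (ω.erase i) = binomWOn p s ω :=
  binomWOn_congr fun j hj => by rw [mem_erase, and_iff_right (ne_of_mem_of_not_mem hj his)]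

theorem sum_powerset_insert_binomWOn_mul (his : i ∉ s) (g : Finset ι → ℝ) :
    ∑ ω ∈ (insert i s).powerset, binomWOn p (insert i s) ω * g ω =
      (1 - p) * ∑ ω ∈ s.powerset, binomWOn p s ω * g ω +
        p * ∑ ω ∈ s.powerset, binomWOn p s ω * g (insert i ω) := by
  rw [sum_powerset_insert his, mul_sum, mul_sum]
  congr 1 <;> refine sum_congr rfl fun ω hω => ?_
  · have hiω : i ∉ ω := fun h => his (mem_powerset.1 hω h)
    rw [binomWOn_insert his, if_neg hiω, mul_assoc]
  · rw [binomWOn_insert his, if_pos (mem_insert_self i ω), binomWOn_insert_self his, mul_assoc]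

theorem sum_powerset_binomWOn (s : Finset ι) : ∑ ω ∈ s.powerset, binomWOn p s ω = 1 := by
  induction s using Finset.induction_on with
  | empty => simp [binomWOn]
  | insert i s his ih =>
    have h := sum_powerset_insert_binomWOn_mul (p := p) his fun _ => 1
    simp only [mul_one] at h
    rw [h, ih]
    ring

noncomputable def fiberOff (A : Finset (Finset ι)) (i : ι) : Finset (Finset ι) :=
  A.filter (i ∉ ·)

noncomputable def fiberOn (A : Finset (Finset ι)) (i : ι) : Finset (Finset ι) :=
  (A.filter (i ∈ ·)).image (·.erase i)

noncomputable def proj (A : Finset (Finset ι)) (i : ι) : Finset (Finset ι) :=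
  A.image (·.erase i)

theorem proj_nonempty {A : Finset (Finset ι)} (hA : A.Nonempty) (i : ι) :
    (proj A i).Nonempty :=
  hA.image _

theorem mem_fiberOff {A : Finset (Finset ι)} {τ : Finset ι} :
    τ ∈ fiberOff A i ↔ τ ∈ A ∧ i ∉ τ :=
  mem_filter

theorem mem_fiberOn {A : Finset (Finset ι)} {τ : Finset ι} :
    τ ∈ fiberOn A i ↔ i ∉ τ ∧ insert i τ ∈ A := by
  simp only [fiberOn, mem_image, mem_filter]
  constructor
  · rintro ⟨σ, ⟨hσ, hiσ⟩, rfl⟩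
    exact ⟨notMem_erase i σ, by rwa [insert_erase hiσ]⟩
  · rintro ⟨hiτ, hτ⟩
    exact ⟨insert i τ, ⟨hτ, mem_insert_self i τ⟩, erase_insert hiτ⟩

theorem fiberOff_subset_proj (A : Finset (Finset ι)) (i : ι) : fiberOff A i ⊆ proj A i :=
  fun τ hτ => mem_image.2 ⟨τ, (mem_fiberOff.1 hτ).1, erase_eq_of_notMem (mem_fiberOff.1 hτ).2⟩

theorem fiberOn_subset_proj (A : Finset (Finset ι)) (i : ι) : fiberOn A i ⊆ proj A i :=
  image_subset_image (filter_subset _ _)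

theorem exists_agree_of_mem_proj {A : Finset (Finset ι)} {τ : Finset ι} (hτ : τ ∈ proj A i) :
    ∃ σ ∈ A, ∀ j, j ≠ i → (j ∈ σ ↔ j ∈ τ) := by
  obtain ⟨σ, hσ, rfl⟩ := mem_image.1 hτ
  exact ⟨σ, hσ, fun j hj => by rw [mem_erase, and_iff_right hj]⟩

theorem proj_subset_powerset {A : Finset (Finset ι)} (hA : A ⊆ (insert i s).powerset) :
    proj A i ⊆ s.powerset := by
  intro τ hτ
  obtain ⟨σ, hσ, rfl⟩ := mem_image.1 hτ
  exact mem_powerset.2 (subset_insert_iff.1 (mem_powerset.1 (hA hσ)))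

theorem sum_binomWOn_insert (his : i ∉ s) (A : Finset (Finset ι)) :
    ∑ σ ∈ A, binomWOn p (insert i s) σ =
      (1 - p) * ∑ σ ∈ fiberOff A i, binomWOn p s σ +
        p * ∑ τ ∈ fiberOn A i, binomWOn p s τ := by
  have hinj : Set.InjOn (fun σ : Finset ι => σ.erase i) ↑(A.filter (i ∈ ·)) := fun σ hσ τ hτ =>
    erase_injOn' i (mem_filter.1 hσ).2 (mem_filter.1 hτ).2
  rw [← sum_filter_not_add_sum_filter A (i ∈ ·), fiberOff, fiberOn, sum_image hinj,
    mul_sum, mul_sum]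
  congr 1 <;> refine sum_congr rfl fun σ hσ => ?_
  · rw [binomWOn_insert his, if_neg (mem_filter.1 hσ).2]
  · rw [binomWOn_insert his, if_pos (mem_filter.1 hσ).2, binomWOn_erase his]

variable [Fintype ι]

theorem binomW_eq_binomWOn : (binomW p : Finset ι → ℝ) = binomWOn p univ :=
  rfl

theorem binomW_nonneg (hp0 : 0 ≤ p) (hp1 : p ≤ 1) (H : Finset ι) : 0 ≤ binomW p H :=
  binomWOn_nonneg hp0 hp1 _ _

theorem wProb_binomW_nonneg (hp0 : 0 ≤ p) (hp1 : p ≤ 1) (S : Set (Finset ι)) :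
    0 ≤ wProb (binomW p) S :=
  sum_nonneg fun H _ => binomW_nonneg hp0 hp1 H

theorem wProb_binomW_le_one (hp0 : 0 ≤ p) (hp1 : p ≤ 1) (S : Set (Finset ι)) :
    wProb (binomW p) S ≤ 1 :=
  calc wProb (binomW p) S ≤ ∑ H, binomW p H :=
        sum_le_sum_of_subset_of_nonneg (filter_subset _ _) fun H _ _ => binomW_nonneg hp0 hp1 H
    _ = 1 := by simpa [binomW_eq_binomWOn] using sum_powerset_binomWOn (p := p) (univ : Finset ι)

end BinomialWeight

section ConvexDistance

variable {ι : Type*}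

noncomputable def mismatch (ω σ : Finset ι) (j : ι) : ℝ :=
  if j ∈ ω ↔ j ∈ σ then 0 else 1

theorem mismatch_nonneg (ω σ : Finset ι) (j : ι) : 0 ≤ mismatch ω σ j := by
  unfold mismatch; split_ifs <;> norm_num

theorem mismatch_le_one (ω σ : Finset ι) (j : ι) : mismatch ω σ j ≤ 1 := by
  unfold mismatch; split_ifs <;> norm_num

/-- The mismatch vectors of `ω` against `A`, closed upwards inside `[0, 1]^ι`: this leaves the
convex distance unchanged and makes it behave well under changing one coordinate. -/
def mismatchSet (A : Finset (Finset ι)) (ω : Finset ι) : Set (ι → ℝ) :=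
  {ν | ∃ σ ∈ A, ∀ j, mismatch ω σ j ≤ ν j ∧ ν j ≤ 1}

theorem update_convex_comb (ν μ : ι → ℝ) (i : ι) (a b c₁ c₂ : ℝ) :
    Function.update (a • ν + b • μ) i (a * c₁ + b * c₂) =
      a • Function.update ν i c₁ + b • Function.update μ i c₂ := by
  rw [← smul_eq_mul a, ← smul_eq_mul b, Function.update_add, Function.update_smul,
    Function.update_smul]

variable {A : Finset (Finset ι)} {ω : Finset ι}

theorem mismatch_mem_mismatchSet {σ : Finset ι} (hσ : σ ∈ A) :
    mismatch ω σ ∈ mismatchSet A ω :=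
  ⟨σ, hσ, fun j => ⟨le_rfl, mismatch_le_one ω σ j⟩⟩

theorem convexHull_mismatchSet_nonempty (hA : A.Nonempty) (ω : Finset ι) :
    (convexHull ℝ (mismatchSet A ω)).Nonempty :=
  let ⟨_, hσ⟩ := hA
  ⟨_, subset_convexHull ℝ _ (mismatch_mem_mismatchSet hσ)⟩

theorem update_mem_convexHull_mismatchSet {Ax : Finset (Finset ι)} {ω' : Finset ι} {i : ι}
    {c : ℝ} (hc : c ≤ 1) (hω : ∀ j, j ≠ i → (j ∈ ω' ↔ j ∈ ω))
    (hAx : ∀ τ ∈ Ax, ∃ σ ∈ A, mismatch ω' σ i ≤ c ∧ ∀ j, j ≠ i → (j ∈ σ ↔ j ∈ τ))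
    {ν : ι → ℝ} (hν : ν ∈ convexHull ℝ (mismatchSet Ax ω)) :
    Function.update ν i c ∈ convexHull ℝ (mismatchSet A ω') := by
  refine convexHull_min (t := (Function.update · i c) ⁻¹' convexHull ℝ (mismatchSet A ω'))
    ?_ ?_ hν
  · rintro μ ⟨τ, hτ, hμ⟩
    obtain ⟨σ, hσ, hσi, hστ⟩ := hAx τ hτ
    refine subset_convexHull ℝ _ ⟨σ, hσ, fun j => ?_⟩
    dsimp only
    rcases eq_or_ne j i with rfl | hj
    · rw [Function.update_self]
      exact ⟨hσi, hc⟩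
    · have : mismatch ω' σ j = mismatch ω τ j := by simp only [mismatch, hω j hj, hστ j hj]
      rw [Function.update_of_ne hj, this]
      exact hμ j
  · intro x hx y hy a b ha hb hab
    have hc : c = a * c + b * c := by rw [← add_mul, hab, one_mul]
    simp only [Set.mem_preimage]
    rw [hc, update_convex_comb]
    exact convex_convexHull ℝ _ hx hy ha hb hab

variable [Fintype ι]

noncomputable def sumSq (ν : ι → ℝ) : ℝ :=
  ∑ j, ν j ^ 2

/-- The square of Talagrand's convex distance from `ω` to `A` (junk value `0` if `A = ∅`). -/
noncomputable def convexDistSq (A : Finset (Finset ι)) (ω : Finset ι) : ℝ :=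
  sInf (sumSq '' convexHull ℝ (mismatchSet A ω))

theorem convexDistSq_le {ν : ι → ℝ} (hν : ν ∈ convexHull ℝ (mismatchSet A ω)) :
    convexDistSq A ω ≤ sumSq ν :=
  csInf_le ⟨0, by rintro _ ⟨ν, -, rfl⟩; exact sum_nonneg fun j _ => sq_nonneg _⟩ ⟨ν, hν, rfl⟩

theorem le_convexDistSq (hA : A.Nonempty) {c : ℝ}
    (h : ∀ ν ∈ convexHull ℝ (mismatchSet A ω), c ≤ sumSq ν) : c ≤ convexDistSq A ω :=
  le_csInf ((convexHull_mismatchSet_nonempty hA ω).image _) (by rintro _ ⟨ν, hν, rfl⟩; exact h ν hν)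

theorem le_mul_convexDistSq_add (hA : A.Nonempty) {x a d : ℝ} (ha : 0 ≤ a)
    (h : ∀ ν ∈ convexHull ℝ (mismatchSet A ω), x ≤ a * sumSq ν + d) :
    x ≤ a * convexDistSq A ω + d := by
  rcases ha.eq_or_lt with rfl | ha
  · obtain ⟨ν, hν⟩ := convexHull_mismatchSet_nonempty hA ω
    simpa using h ν hν
  · have : (x - d) / a ≤ convexDistSq A ω :=
      le_convexDistSq hA fun ν hν => by rw [div_le_iff₀' ha]; linarith [h ν hν]
    rw [div_le_iff₀' ha] at this
    linarith

theorem sumSq_update_le (ν : ι → ℝ) (i : ι) (c : ℝ) :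
    sumSq (Function.update ν i c) ≤ c ^ 2 + sumSq ν :=
  calc sumSq (Function.update ν i c) = c ^ 2 + ∑ j ∈ univ.erase i, ν j ^ 2 := by
        rw [sumSq, ← add_sum_erase _ _ (mem_univ i), Function.update_self]
        congr 1
        exact sum_congr rfl fun j hj => by rw [Function.update_of_ne (ne_of_mem_erase hj)]
    _ ≤ c ^ 2 + sumSq ν := by
        gcongr
        exact sum_le_sum_of_subset_of_nonneg (erase_subset _ _) fun _ _ _ => sq_nonneg _

theorem sumSq_convex_comb_le (ν μ : ι → ℝ) {l : ℝ} (hl0 : 0 ≤ l) (hl1 : l ≤ 1) :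
    sumSq (l • ν + (1 - l) • μ) ≤ l * sumSq ν + (1 - l) * sumSq μ := by
  simp only [sumSq, mul_sum, ← sum_add_distrib]
  refine sum_le_sum fun j _ => ?_
  simp only [Pi.add_apply, Pi.smul_apply, smul_eq_mul]
  nlinarith [sq_nonneg (ν j - μ j), mul_nonneg hl0 (sub_nonneg.2 hl1)]

theorem convexDistSq_le_interpolate {Ax Ay : Finset (Finset ι)} {ω' : Finset ι} {i : ι}
    {c₁ c₂ l : ℝ} (hc₁ : c₁ ≤ 1) (hc₂ : c₂ ≤ 1) (hl0 : 0 ≤ l) (hl1 : l ≤ 1)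
    (hAx : Ax.Nonempty) (hAy : Ay.Nonempty) (hω : ∀ j, j ≠ i → (j ∈ ω' ↔ j ∈ ω))
    (hx : ∀ τ ∈ Ax, ∃ σ ∈ A, mismatch ω' σ i ≤ c₁ ∧ ∀ j, j ≠ i → (j ∈ σ ↔ j ∈ τ))
    (hy : ∀ τ ∈ Ay, ∃ σ ∈ A, mismatch ω' σ i ≤ c₂ ∧ ∀ j, j ≠ i → (j ∈ σ ↔ j ∈ τ)) :
    convexDistSq A ω' ≤
      (l * c₁ + (1 - l) * c₂) ^ 2 + l * convexDistSq Ax ω + (1 - l) * convexDistSq Ay ω := by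
  have key : ∀ ν ∈ convexHull ℝ (mismatchSet Ax ω), ∀ μ ∈ convexHull ℝ (mismatchSet Ay ω),
      convexDistSq A ω' ≤ (l * c₁ + (1 - l) * c₂) ^ 2 + l * sumSq ν + (1 - l) * sumSq μ := by
    intro ν hν μ hμ
    have hmem : l • Function.update ν i c₁ + (1 - l) • Function.update μ i c₂ ∈
        convexHull ℝ (mismatchSet A ω') :=
      convex_convexHull ℝ _ (update_mem_convexHull_mismatchSet hc₁ hω hx hν)
        (update_mem_convexHull_mismatchSet hc₂ hω hy hμ) hl0 (sub_nonneg.2 hl1) (by ring)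
    rw [← update_convex_comb] at hmem
    linarith [convexDistSq_le hmem, sumSq_update_le (l • ν + (1 - l) • μ) i
      (l * c₁ + (1 - l) * c₂), sumSq_convex_comb_le ν μ hl0 hl1]
  have h : ∀ μ ∈ convexHull ℝ (mismatchSet Ay ω), convexDistSq A ω' ≤
      (1 - l) * sumSq μ + ((l * c₁ + (1 - l) * c₂) ^ 2 + l * convexDistSq Ax ω) := by
    intro μ hμ
    have := le_mul_convexDistSq_add hAx hl0 (x := convexDistSq A ω')
      (d := (l * c₁ + (1 - l) * c₂) ^ 2 + (1 - l) * sumSq μ) fun ν hν => by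
        linarith [key ν hν μ hμ]
    linarith
  linarith [le_mul_convexDistSq_add hAy (sub_nonneg.2 hl1) h]

end ConvexDistance

section Analysis

variable {γ : Type*} (t : Finset γ)

theorem sum_mul_rpow_mul_rpow_le {w g h : γ → ℝ} (hw : ∀ k ∈ t, 0 ≤ w k)
    (hg : ∀ k ∈ t, 0 ≤ g k) (hh : ∀ k ∈ t, 0 ≤ h k) {l : ℝ} (hl0 : 0 ≤ l) (hl1 : l ≤ 1)
    (hG : 0 < ∑ k ∈ t, w k * g k) (hH : 0 < ∑ k ∈ t, w k * h k) :
    ∑ k ∈ t, w k * (g k ^ l * h k ^ (1 - l)) ≤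
      (∑ k ∈ t, w k * g k) ^ l * (∑ k ∈ t, w k * h k) ^ (1 - l) := by
  set G := ∑ k ∈ t, w k * g k
  set H := ∑ k ∈ t, w k * h k
  have hGH : 0 < G ^ l * H ^ (1 - l) := by positivity
  -- weighted AM-GM applied to `g k / G` and `h k / H`
  have key : ∀ k ∈ t, w k * (g k ^ l * h k ^ (1 - l)) ≤
      G ^ l * H ^ (1 - l) * (l / G * (w k * g k) + (1 - l) / H * (w k * h k)) := by
    intro k hk
    have amgm := geom_mean_le_arith_mean2_weighted hl0 (sub_nonneg.2 hl1)
      (div_nonneg (hg k hk) hG.le) (div_nonneg (hh k hk) hH.le) (by ring)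
    rw [div_rpow (hg k hk) hG.le, div_rpow (hh k hk) hH.le] at amgm
    calc w k * (g k ^ l * h k ^ (1 - l))
        = w k * (G ^ l * H ^ (1 - l)) * (g k ^ l / G ^ l * (h k ^ (1 - l) / H ^ (1 - l))) := by
          field_simp
      _ ≤ w k * (G ^ l * H ^ (1 - l)) * (l * (g k / G) + (1 - l) * (h k / H)) := by
          gcongr
          exact mul_nonneg (hw k hk) hGH.le
      _ = _ := by ring
  calc ∑ k ∈ t, w k * (g k ^ l * h k ^ (1 - l))
      ≤ ∑ k ∈ t, G ^ l * H ^ (1 - l) * (l / G * (w k * g k) + (1 - l) / H * (w k * h k)) :=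
        sum_le_sum key
    _ = G ^ l * H ^ (1 - l) * (l / G * G + (1 - l) / H * H) := by
        rw [← mul_sum, sum_add_distrib, ← mul_sum, ← mul_sum]
    _ = G ^ l * H ^ (1 - l) := by field_simp; ring

theorem sum_mul_exp_pos {w f : γ → ℝ} (hw : ∀ k ∈ t, 0 ≤ w k) (hw1 : ∑ k ∈ t, w k = 1) :
    0 < ∑ k ∈ t, w k * exp (f k) := by
  obtain ⟨k, hk, hwk⟩ := exists_ne_zero_of_sum_ne_zero (hw1.trans_ne one_ne_zero)
  exact sum_pos' (fun k hk => mul_nonneg (hw k hk) (exp_pos _).le)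
    ⟨k, hk, mul_pos ((hw k hk).lt_of_ne' hwk) (exp_pos _)⟩

theorem exp_le_of_abs_le_one {x : ℝ} (hx : |x| ≤ 1) :
    exp x ≤ 1 + x + x ^ 2 / 2 + 2 / 9 * |x| ^ 3 := by
  have h := abs_le.1 (exp_bound hx (n := 3) (by norm_num))
  norm_num [sum_range_succ, Nat.factorial] at h
  linarith [h.2]

theorem exp_quarter_le : exp (1 / 4) ≤ 2 - exp (-(1 / 2)) := by
  have h₁ := exp_le_of_abs_le_one (x := 1 / 4) (by norm_num [abs_of_pos])
  have h₂ := exp_le_of_abs_le_one (x := -(1 / 2)) (by norm_num [abs_of_pos])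
  norm_num [abs_of_pos] at h₁ h₂
  linarith

theorem exp_sub_sq_le {t : ℝ} (h0 : 0 ≤ t) (h1 : t ≤ 1 / 2) :
    exp (t - t ^ 2) ≤ 2 - exp (-t) := by
  have hu : 0 ≤ t - t ^ 2 := by nlinarith
  have h₁ := exp_le_of_abs_le_one (x := t - t ^ 2) (by rw [abs_of_nonneg hu]; nlinarith)
  have h₂ := exp_le_of_abs_le_one (x := -t) (by rw [abs_neg, abs_of_nonneg h0]; linarith)
  rw [abs_of_nonneg hu] at h₁
  rw [abs_neg, abs_of_nonneg h0] at h₂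
  nlinarith [pow_nonneg h0 3, pow_nonneg h0 4, mul_nonneg (mul_nonneg h0 h0) h0,
    sq_nonneg (t * (1 - t))]

theorem exists_exp_sq_mul_inv_rpow_le {r : ℝ} (hr0 : 0 < r) (hr1 : r ≤ 1) :
    ∃ l ∈ Set.Icc (0 : ℝ) 1, exp (l ^ 2 / 4) * r⁻¹ ^ (1 - l) ≤ 2 - r := by
  rcases le_or_gt r (exp (-(1 / 2))) with hr | hr
  · refine ⟨1, ⟨zero_le_one, le_rfl⟩, ?_⟩
    rw [sub_self, rpow_zero, mul_one, one_pow]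
    linarith [exp_quarter_le]
  · set t := -log r with ht
    have ht0 : 0 ≤ t := neg_nonneg.2 (log_nonpos hr0.le hr1)
    have ht1 : t < 1 / 2 := by linarith [(lt_log_iff_exp_lt hr0).2 hr]
    refine ⟨2 * t, ⟨by linarith, by linarith⟩, ?_⟩
    calc exp ((2 * t) ^ 2 / 4) * r⁻¹ ^ (1 - 2 * t) = exp (t - t ^ 2) := by
          rw [rpow_def_of_pos (inv_pos.2 hr0), log_inv, ← exp_add, ← ht]
          ring_nf
      _ ≤ 2 - exp (-t) := exp_sub_sq_le ht0 ht1.le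
      _ = 2 - r := by rw [ht, neg_neg, exp_log hr0]

theorem sum_mul_exp_le_of_le_interpolate {w fA fB fx : γ → ℝ} (hw : ∀ k ∈ t, 0 ≤ w k)
    (hw1 : ∑ k ∈ t, w k = 1) {l : ℝ} (hl0 : 0 ≤ l) (hl1 : l ≤ 1)
    (hA : ∀ k ∈ t, fA k ≤ l ^ 2 + l * fB k + (1 - l) * fx k) :
    ∑ k ∈ t, w k * exp (fA k / 4) ≤ exp (l ^ 2 / 4) *
      ((∑ k ∈ t, w k * exp (fB k / 4)) ^ l * (∑ k ∈ t, w k * exp (fx k / 4)) ^ (1 - l)) :=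
  calc ∑ k ∈ t, w k * exp (fA k / 4)
      ≤ ∑ k ∈ t, exp (l ^ 2 / 4) * (w k * (exp (fB k / 4) ^ l * exp (fx k / 4) ^ (1 - l))) :=
        sum_le_sum fun k hk => by
          rw [← exp_mul, ← exp_mul, ← exp_add, mul_left_comm, ← exp_add]
          exact mul_le_mul_of_nonneg_left (exp_le_exp.2 (by linarith [hA k hk])) (hw k hk)
    _ = exp (l ^ 2 / 4) * ∑ k ∈ t, w k * (exp (fB k / 4) ^ l * exp (fx k / 4) ^ (1 - l)) :=
        (mul_sum _ _ _).symm
    _ ≤ _ := mul_le_mul_of_nonneg_left (sum_mul_rpow_mul_rpow_le t hw (fun k _ => (exp_pos _).le)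
        (fun k _ => (exp_pos _).le) hl0 hl1 (sum_mul_exp_pos t hw hw1)
        (sum_mul_exp_pos t hw hw1)) (exp_pos _).le

/-- In the induction step `fA`, `fB`, `fx` are the squared convex distances to a family, to its
projection and to one of its fibres, and `PB`, `Px` the measures of the projection and the fibre. -/
theorem sum_mul_exp_mul_le_two_sub {w fA fB fx : γ → ℝ} {PB Px : ℝ}
    (hw : ∀ k ∈ t, 0 ≤ w k) (hw1 : ∑ k ∈ t, w k = 1) (hPB : 0 < PB) (hPx : 0 ≤ Px)
    (hPxB : Px ≤ PB) (hAB : ∀ k ∈ t, fA k ≤ 1 + fB k)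
    (hAx : 0 < Px → ∀ l ∈ Set.Icc (0 : ℝ) 1, ∀ k ∈ t, fA k ≤ l ^ 2 + l * fB k + (1 - l) * fx k)
    (hB : (∑ k ∈ t, w k * exp (fB k / 4)) * PB ≤ 1)
    (hx : 0 < Px → (∑ k ∈ t, w k * exp (fx k / 4)) * Px ≤ 1) :
    (∑ k ∈ t, w k * exp (fA k / 4)) * PB ≤ 2 - Px / PB := by
  set SB := ∑ k ∈ t, w k * exp (fB k / 4)
  have hSB : 0 < SB := sum_mul_exp_pos t hw hw1
  rcases hPx.eq_or_lt with rfl | hPx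
  · have h := sum_mul_exp_le_of_le_interpolate t hw hw1 zero_le_one le_rfl (fA := fA)
      (fB := fB) (fx := fB) fun k hk => by linarith [hAB k hk]
    rw [rpow_one, sub_self, rpow_zero, mul_one, one_pow] at h
    calc (∑ k ∈ t, w k * exp (fA k / 4)) * PB ≤ exp (1 / 4) * (SB * PB) := by
          rw [← mul_assoc]; gcongr
      _ ≤ exp (1 / 4) := mul_le_of_le_one_right (exp_pos _).le hB
      _ ≤ 2 - 0 / PB := by
          rw [zero_div, sub_zero]
          linarith [exp_quarter_le, exp_pos (-(1 / 2))]
  obtain ⟨l, ⟨hl0, hl1⟩, hlr⟩ :=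
    exists_exp_sq_mul_inv_rpow_le (div_pos hPx hPB) (div_le_one_of_le₀ hPxB hPB.le)
  set Sx := ∑ k ∈ t, w k * exp (fx k / 4)
  have hSx : 0 < Sx := sum_mul_exp_pos t hw hw1
  have hSxPB : Sx * PB ≤ (Px / PB)⁻¹ := by
    rw [inv_div, le_div_iff₀ hPx]
    nlinarith [hx hPx]
  have hPB1 : PB = PB ^ l * PB ^ (1 - l) := by rw [← rpow_add hPB, add_sub_cancel, rpow_one]
  calc (∑ k ∈ t, w k * exp (fA k / 4)) * PB
      ≤ exp (l ^ 2 / 4) * (SB ^ l * Sx ^ (1 - l)) * PB := by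
        gcongr
        exact sum_mul_exp_le_of_le_interpolate t hw hw1 hl0 hl1 (hAx hPx l ⟨hl0, hl1⟩)
    _ = exp (l ^ 2 / 4) * ((SB * PB) ^ l * (Sx * PB) ^ (1 - l)) := by
        rw [mul_rpow hSB.le hPB.le, mul_rpow hSx.le hPB.le]
        conv_lhs => rw [hPB1]
        ring
    _ ≤ exp (l ^ 2 / 4) * (1 * (Px / PB)⁻¹ ^ (1 - l)) := by
        gcongr
        exact rpow_le_one (by positivity) hB hl0
    _ ≤ 2 - Px / PB := by rwa [one_mul]

end Analysis

section Inequality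

variable {ι : Type*} [Fintype ι] {p : ℝ}

theorem mul_le_one_of_le_two_sub {T₀ T₁ P₀ P₁ PB : ℝ} (hp0 : 0 ≤ p) (hp1 : p ≤ 1)
    (hPB : 0 < PB) (hP₀ : 0 ≤ P₀) (hP₁ : 0 ≤ P₁)
    (h₀ : T₀ * PB ≤ 2 - P₀ / PB) (h₁ : T₁ * PB ≤ 2 - P₁ / PB) :
    ((1 - p) * T₀ + p * T₁) * ((1 - p) * P₀ + p * P₁) ≤ 1 := by
  set r := ((1 - p) * P₀ + p * P₁) / PB
  have hr : 0 ≤ r := div_nonneg (by nlinarith) hPB.le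
  have hT : ((1 - p) * T₀ + p * T₁) * PB ≤ 2 - r := by
    have := add_le_add (mul_le_mul_of_nonneg_left h₀ (sub_nonneg.2 hp1))
      (mul_le_mul_of_nonneg_left h₁ hp0)
    simp only [r, add_div, mul_div_assoc]
    linarith
  calc ((1 - p) * T₀ + p * T₁) * ((1 - p) * P₀ + p * P₁)
      = ((1 - p) * T₀ + p * T₁) * PB * r := by simp only [r]; field_simp
    _ ≤ (2 - r) * r := mul_le_mul_of_nonneg_right hT hr
    _ ≤ 1 := by nlinarith [sq_nonneg (r - 1)]

/-- `g ω` is `ω` with coordinate `i` set to the value over which `Ax` is the fibre of `A`. -/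
theorem mul_sum_le_two_sub_of_fiber (hp0 : 0 ≤ p) (hp1 : p ≤ 1) {s : Finset ι} {i : ι}
    (ih : ∀ A : Finset (Finset ι), A.Nonempty → A ⊆ s.powerset →
      (∑ ω ∈ s.powerset, binomWOn p s ω * exp (convexDistSq A ω / 4)) *
        ∑ σ ∈ A, binomWOn p s σ ≤ 1)
    {A Ax : Finset (Finset ι)} (hA : A.Nonempty) (hproj : proj A i ⊆ s.powerset)
    (hAx : Ax ⊆ proj A i) {g : Finset ι → Finset ι} (hg : ∀ ω j, j ≠ i → (j ∈ g ω ↔ j ∈ ω))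
    (hgAx : ∀ ω ∈ s.powerset, ∀ τ ∈ Ax,
      ∃ σ ∈ A, mismatch (g ω) σ i ≤ 0 ∧ ∀ j, j ≠ i → (j ∈ σ ↔ j ∈ τ))
    (hPB : 0 < ∑ σ ∈ proj A i, binomWOn p s σ) :
    (∑ ω ∈ s.powerset, binomWOn p s ω * exp (convexDistSq A (g ω) / 4)) *
        ∑ σ ∈ proj A i, binomWOn p s σ ≤
      2 - (∑ σ ∈ Ax, binomWOn p s σ) / ∑ σ ∈ proj A i, binomWOn p s σ := by
  have hprojA : ∀ ω, ∀ τ ∈ proj A i,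
      ∃ σ ∈ A, mismatch (g ω) σ i ≤ 1 ∧ ∀ j, j ≠ i → (j ∈ σ ↔ j ∈ τ) := fun ω τ hτ =>
    let ⟨σ, hσ, hστ⟩ := exists_agree_of_mem_proj hτ
    ⟨σ, hσ, mismatch_le_one _ _ _, hστ⟩
  have hW := binomWOn_nonneg hp0 hp1 s
  have hAx_ne : 0 < ∑ σ ∈ Ax, binomWOn p s σ → Ax.Nonempty := fun h =>
    nonempty_of_sum_ne_zero h.ne'
  refine sum_mul_exp_mul_le_two_sub _ (fun ω _ => hW ω) (sum_powerset_binomWOn s) hPB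
    (sum_nonneg fun σ _ => hW σ) (sum_le_sum_of_subset_of_nonneg hAx fun σ _ _ => hW σ)
    (fun ω _ => ?_) (fun h l hl ω hω => ?_) (ih _ (proj_nonempty hA i) hproj)
    fun h => ih _ (hAx_ne h) (hAx.trans hproj)
  · simpa using convexDistSq_le_interpolate (l := 1) le_rfl le_rfl zero_le_one le_rfl
      (proj_nonempty hA i) (proj_nonempty hA i) (hg ω) (hprojA ω) (hprojA ω)
  · simpa using convexDistSq_le_interpolate (c₂ := 0) le_rfl zero_le_one hl.1 hl.2
      (proj_nonempty hA i) (hAx_ne h) (hg ω) (hprojA ω) (hgAx ω hω)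

theorem sum_mul_exp_convexDistSq_mul_sum_le_one (hp0 : 0 ≤ p) (hp1 : p ≤ 1) (s : Finset ι) :
    ∀ A : Finset (Finset ι), A.Nonempty → A ⊆ s.powerset →
      (∑ ω ∈ s.powerset, binomWOn p s ω * exp (convexDistSq A ω / 4)) *
        ∑ σ ∈ A, binomWOn p s σ ≤ 1 := by
  induction s using Finset.induction_on with
  | empty =>
    intro A hA hAs
    obtain rfl : A = {∅} := (subset_singleton_iff.1 hAs).resolve_left hA.ne_empty
    have hD : convexDistSq {∅} (∅ : Finset ι) ≤ 0 := by
      simpa [sumSq, mismatch] using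
        convexDistSq_le (subset_convexHull ℝ _ (mismatch_mem_mismatchSet (ω := ∅)
          (mem_singleton_self (∅ : Finset ι))))
    simp only [powerset_empty, sum_singleton, binomWOn, prod_empty, one_mul, mul_one]
    exact exp_le_one_iff.2 (by linarith)
  | insert i s his ih =>
    intro A hA hAs
    have hproj := proj_subset_powerset hAs
    have hW := binomWOn_nonneg hp0 hp1 s
    rw [sum_powerset_insert_binomWOn_mul his, sum_binomWOn_insert his]
    rcases (sum_nonneg fun σ (_ : σ ∈ proj A i) => hW σ).eq_or_lt with hPB | hPB
    · have hfiber : ∀ Ax ⊆ proj A i, ∑ σ ∈ Ax, binomWOn p s σ = 0 := fun Ax hAx =>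
        le_antisymm (hPB ▸ sum_le_sum_of_subset_of_nonneg hAx fun σ _ _ => hW σ)
          (sum_nonneg fun σ _ => hW σ)
      simp [hfiber _ (fiberOff_subset_proj A i), hfiber _ (fiberOn_subset_proj A i)]
    refine mul_le_one_of_le_two_sub hp0 hp1 hPB (sum_nonneg fun σ _ => hW σ)
      (sum_nonneg fun σ _ => hW σ) ?_ ?_
    · refine mul_sum_le_two_sub_of_fiber hp0 hp1 ih hA hproj (fiberOff_subset_proj A i)
        (g := fun ω => ω) (fun _ _ _ => Iff.rfl) (fun ω hω τ hτ => ?_) hPB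
      obtain ⟨hτA, hiτ⟩ := mem_fiberOff.1 hτ
      have hiω : i ∉ ω := fun h => his (mem_powerset.1 hω h)
      exact ⟨τ, hτA, by simp [mismatch, hiω, hiτ], fun _ _ => Iff.rfl⟩
    · refine mul_sum_le_two_sub_of_fiber hp0 hp1 ih hA hproj (fiberOn_subset_proj A i)
        (g := insert i) (fun ω j hj => by rw [mem_insert, or_iff_right hj])
        (fun ω _ τ hτ => ?_) hPB
      obtain ⟨hiτ, hτA⟩ := mem_fiberOn.1 hτ
      exact ⟨insert i τ, hτA, by simp [mismatch], fun j hj => by rw [mem_insert, or_iff_right hj]⟩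

theorem wExp_exp_convexDistSq_mul_wProb_le_one (hp0 : 0 ≤ p) (hp1 : p ≤ 1)
    {A : Finset (Finset ι)} (hA : A.Nonempty) :
    wExp (binomW p) (fun ω => exp (convexDistSq A ω / 4)) *
      wProb (binomW p) (A : Set (Finset ι)) ≤ 1 := by
  have h := sum_mul_exp_convexDistSq_mul_sum_le_one hp0 hp1 univ A hA (by simp)
  rw [powerset_univ] at h
  simpa [wExp, wProb, binomW_eq_binomWOn] using h

end Inequality

section Certifiable

variable {ι : Type*} [Fintype ι] {p : ℝ}

/-- Talagrand's condition that `f` be 1-Lipschitz and `f`-certifiable. -/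
def IsCertifiable (f : Finset ι → ℕ) : Prop :=
  ∀ ω, ∃ I ⊆ ω, I.card ≤ f ω ∧ ∀ σ, f ω ≤ f σ + (I \ σ).card

variable {f : Finset ι → ℕ}

theorem IsCertifiable.sq_sub_div_le_convexDistSq (hf : IsCertifiable f)
    {A : Finset (Finset ι)} (hA : A.Nonempty) {a : ℝ} (hAa : ∀ σ ∈ A, (f σ : ℝ) ≤ a)
    {ω : Finset ι} (haω : a ≤ f ω) (hω : 0 < f ω) :
    ((f ω : ℝ) - a) ^ 2 / f ω ≤ convexDistSq A ω := by
  obtain ⟨I, hIω, hIcard, hI⟩ := hf ω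
  have hU : mismatchSet A ω ⊆ {ν | (f ω : ℝ) - a ≤ ∑ q ∈ I, ν q} := by
    rintro ν ⟨σ, hσ, hν⟩
    have hcert : (f ω : ℝ) ≤ f σ + (I \ σ).card := by exact_mod_cast hI σ
    calc (f ω : ℝ) - a ≤ (I \ σ).card := by linarith [hAa σ hσ]
      _ = ∑ q ∈ I \ σ, mismatch ω σ q := by
          rw [card_eq_sum_ones, Nat.cast_sum, Nat.cast_one]
          refine sum_congr rfl fun q hq => ?_
          simp [mismatch, hIω (mem_sdiff.1 hq).1, (mem_sdiff.1 hq).2]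
      _ ≤ ∑ q ∈ I, ν q :=
          (sum_le_sum fun q _ => (hν q).1).trans (sum_le_sum_of_subset_of_nonneg sdiff_subset
            fun q _ _ => (mismatch_nonneg ω σ q).trans (hν q).1)
  have hlin : ∀ ν ∈ convexHull ℝ (mismatchSet A ω), (f ω : ℝ) - a ≤ ∑ q ∈ I, ν q :=
    fun ν hν => convexHull_min hU (convex_halfSpace_ge
      ⟨fun x y => sum_add_distrib, fun c x => by simp [mul_sum]⟩ _) hν
  have hpos : (0 : ℝ) < f ω := by exact_mod_cast hω
  refine le_convexDistSq hA fun ν hν => ?_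
  rw [div_le_iff₀ hpos]
  calc ((f ω : ℝ) - a) ^ 2 ≤ (∑ q ∈ I, ν q) ^ 2 := pow_le_pow_left₀ (by linarith) (hlin ν hν) 2
    _ ≤ I.card * ∑ q ∈ I, ν q ^ 2 := sq_sum_le_card_mul_sum_sq
    _ ≤ f ω * sumSq ν := mul_le_mul (by exact_mod_cast hIcard)
        (sum_le_sum_of_subset_of_nonneg (subset_univ I) fun q _ _ => sq_nonneg _)
        (sum_nonneg fun _ _ => sq_nonneg _) hpos.le
    _ = sumSq ν * f ω := mul_comm _ _

theorem sq_sub_div_le_sq_sub_div {a b x : ℝ} (ha : 0 ≤ a) (hab : a ≤ b) (hb : 0 < b)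
    (hbx : b ≤ x) : (b - a) ^ 2 / b ≤ (x - a) ^ 2 / x := by
  rw [div_le_div_iff₀ hb (hb.trans_le hbx)]
  nlinarith [mul_nonneg (sub_nonneg.2 hbx) (sub_nonneg.2 (mul_le_mul hab (hab.trans hbx) ha hb.le))]

theorem IsCertifiable.wProb_le_mul_wProb_ge_le (hf : IsCertifiable f) (hp0 : 0 ≤ p)
    (hp1 : p ≤ 1) {a b : ℝ} (ha : 0 ≤ a) (hab : a ≤ b) (hb : 0 < b) :
    wProb (binomW p) {ω | (f ω : ℝ) ≤ a} * wProb (binomW p) {ω | b ≤ (f ω : ℝ)} ≤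
      exp (-((b - a) ^ 2 / b) / 4) := by
  set A : Finset (Finset ι) := univ.filter fun ω => (f ω : ℝ) ≤ a
  have hPA : wProb (binomW p) {ω | (f ω : ℝ) ≤ a} = wProb (binomW p) (A : Set (Finset ι)) := by
    rw [coe_filter_univ]
  rcases A.eq_empty_or_nonempty with hA | hA
  · rw [hPA, hA, coe_empty, wProb_empty, zero_mul]
    positivity
  have hMarkov : exp ((b - a) ^ 2 / b / 4) * wProb (binomW p) {ω | b ≤ (f ω : ℝ)} ≤
      wExp (binomW p) fun ω => exp (convexDistSq A ω / 4) := by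
    refine mul_wProb_le_wExp (binomW_nonneg hp0 hp1) (fun _ => (exp_pos _).le) fun ω hω => ?_
    have hbω : b ≤ (f ω : ℝ) := hω
    refine exp_le_exp.2 (div_le_div_of_nonneg_right ?_ zero_le_four)
    exact (sq_sub_div_le_sq_sub_div ha hab hb hbω).trans (hf.sq_sub_div_le_convexDistSq hA
      (fun σ hσ => (mem_filter.1 hσ).2) (hab.trans hbω) (by exact_mod_cast hb.trans_le hbω))
  rw [hPA, neg_div, exp_neg, inv_eq_one_div, le_div_iff₀' (exp_pos _)]
  calc exp ((b - a) ^ 2 / b / 4) *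
        (wProb (binomW p) (A : Set (Finset ι)) * wProb (binomW p) {ω | b ≤ (f ω : ℝ)})
      = exp ((b - a) ^ 2 / b / 4) * wProb (binomW p) {ω | b ≤ (f ω : ℝ)} *
          wProb (binomW p) (A : Set (Finset ι)) := by ring
    _ ≤ (wExp (binomW p) fun ω => exp (convexDistSq A ω / 4)) *
          wProb (binomW p) (A : Set (Finset ι)) :=
        mul_le_mul_of_nonneg_right hMarkov (wProb_binomW_nonneg hp0 hp1 _)
    _ ≤ 1 := wExp_exp_convexDistSq_mul_wProb_le_one hp0 hp1 hA

end Certifiable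

section Tails

variable {ι : Type*} [Fintype ι] {p : ℝ} {f : Finset ι → ℕ} {M s : ℝ}

theorem IsCertifiable.wProb_le_lower_tail (hf : IsCertifiable f) (hp0 : 0 ≤ p) (hp1 : p ≤ 1)
    (hM : IsMedianW (binomW p) (fun ω => (f ω : ℝ)) M) (hs : 0 ≤ s) :
    wProb (binomW p) {ω | (f ω : ℝ) ≤ (1 - s) * M} ≤ 2 * exp (-(s ^ 2 * M) / 4) := by
  rcases (hM.nonneg fun ω => Nat.cast_nonneg (f ω)).eq_or_lt with rfl | hMpos
  · simpa using (wProb_binomW_le_one hp0 hp1 _).trans one_le_two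
  rcases le_or_gt s 1 with hs1 | hs1
  · have hM2 : 1 / 2 ≤ wProb (binomW p) {ω | M ≤ (f ω : ℝ)} := hM.2
    have key := hf.wProb_le_mul_wProb_ge_le hp0 hp1 (mul_nonneg (sub_nonneg.2 hs1) hMpos.le)
      (by nlinarith) hMpos
    rw [show (M - (1 - s) * M) ^ 2 / M = s ^ 2 * M by field_simp; ring] at key
    nlinarith [wProb_binomW_nonneg hp0 hp1 {ω | (f ω : ℝ) ≤ (1 - s) * M}]
  · have hempty : {ω | (f ω : ℝ) ≤ (1 - s) * M} = ∅ :=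
      Set.eq_empty_of_forall_notMem fun ω hω =>
        (mul_neg_of_neg_of_pos (by linarith) hMpos).not_ge ((Nat.cast_nonneg (f ω)).trans hω)
    rw [hempty, wProb_empty]
    positivity

theorem IsCertifiable.wProb_ge_upper_tail (hf : IsCertifiable f) (hp0 : 0 ≤ p) (hp1 : p ≤ 1)
    (hM : IsMedianW (binomW p) (fun ω => (f ω : ℝ)) M) (hs : 0 ≤ s) :
    wProb (binomW p) {ω | (1 + s) * M ≤ (f ω : ℝ)} ≤ 2 * exp (-(s ^ 2 / (1 + s) * M) / 4) := by
  rcases (hM.nonneg fun ω => Nat.cast_nonneg (f ω)).eq_or_lt with rfl | hMpos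
  · simpa using (wProb_binomW_le_one hp0 hp1 _).trans one_le_two
  have hM1 : 1 / 2 ≤ wProb (binomW p) {ω | (f ω : ℝ) ≤ M} := hM.1
  have key := hf.wProb_le_mul_wProb_ge_le hp0 hp1 (b := (1 + s) * M) hMpos.le (by nlinarith)
    (by nlinarith)
  rw [show ((1 + s) * M - M) ^ 2 / ((1 + s) * M) = s ^ 2 / (1 + s) * M by field_simp; ring] at key
  nlinarith [wProb_binomW_nonneg hp0 hp1 {ω | (1 + s) * M ≤ (f ω : ℝ)}]

end Tails

end Talagrand

open Talagrand

theorem BNonCrossing.mono {n : ℕ} {M M' : BG n} (h : M' ⊆ M) (hM : BNonCrossing M) :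
    BNonCrossing M' :=
  fun e he f hf hef => hM e (h he) f (h hf) hef

theorem exists_card_eq_BL {n : ℕ} (G : BG n) : ∃ M ⊆ G, BNonCrossing M ∧ M.card = BL G := by
  obtain ⟨M, hM, hcard⟩ :=
    exists_mem_eq_sup (G.powerset.filter BNonCrossing) ⟨∅, by simp [BNonCrossing]⟩ card
  rw [mem_filter, mem_powerset] at hM
  exact ⟨M, hM.1, hM.2, hcard.symm⟩

theorem card_le_BL {n : ℕ} {G M : BG n} (hMG : M ⊆ G) (hM : BNonCrossing M) : M.card ≤ BL G :=
  le_sup (mem_filter.2 ⟨mem_powerset.2 hMG, hM⟩)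

def pairKey {n : ℕ} (e : Fin n × Fin n) : Fin n × Fin n :=
  (min e.1 e.2, max e.1 e.2)

theorem mem_symGraph_iff {n : ℕ} {F : SymOmega n} {e : Fin n × Fin n} :
    e ∈ symGraph F ↔ ∃ q ∈ F, q.1 = pairKey e := by
  obtain ⟨a, b⟩ := e
  simp only [symGraph, mem_union, mem_image, pairKey]
  constructor
  · rintro (⟨q, hq, h⟩ | ⟨q, hq, h⟩) <;> have hq' := q.2 <;> rw [Prod.ext_iff] at h <;>
      simp only at h <;> rw [← h.1, ← h.2] <;> refine ⟨q, hq, ?_⟩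
    · rw [min_eq_left hq'.le, max_eq_right hq'.le]
    · rw [min_eq_right hq'.le, max_eq_left hq'.le]
  · rintro ⟨q, hq, h⟩
    have hlt : min a b < max a b := by simpa [h] using q.2
    rcases lt_or_gt_of_ne (fun hab : a = b => by simp [hab] at hlt) with hab | hab
    · exact Or.inl ⟨q, hq, by rw [h, min_eq_left hab.le, max_eq_right hab.le]⟩
    · exact Or.inr ⟨q, hq, by rw [h, min_eq_right hab.le, max_eq_left hab.le]⟩

theorem BNonCrossing.injOn_pairKey {n : ℕ} {M : BG n} (hM : BNonCrossing M) :
    Set.InjOn pairKey (M : Set (Fin n × Fin n)) := by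
  intro e he f hf hef
  by_contra hne
  have hmin : min e.1 e.2 = min f.1 f.2 := congrArg Prod.fst hef
  rcases hM e he f hf hne with ⟨h₁, h₂⟩ | ⟨h₁, h₂⟩
  · exact (min_lt_min h₁ h₂).ne hmin
  · exact (min_lt_min h₁ h₂).ne hmin.symm

theorem isCertifiable_BL_symGraph (n : ℕ) :
    IsCertifiable fun F : SymOmega n => BL (symGraph F) := by
  intro ω
  dsimp only
  obtain ⟨M, hMω, hM, hMcard⟩ := exists_card_eq_BL (symGraph ω)
  set I := ω.filter fun q => q.1 ∈ M.image pairKey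
  refine ⟨I, filter_subset _ _, ?_, fun σ => ?_⟩
  · calc I.card = (I.image Subtype.val).card :=
          (card_image_of_injective _ Subtype.val_injective).symm
      _ ≤ (M.image pairKey).card := card_le_card fun k hk => by
          obtain ⟨q, hq, rfl⟩ := mem_image.1 hk
          exact (mem_filter.1 hq).2
      _ ≤ M.card := card_image_le
      _ = BL (symGraph ω) := hMcard
  · have hkept : (M.filter fun e => ∃ q ∈ σ, q.1 = pairKey e).card ≤ BL (symGraph σ) :=
      card_le_BL (fun e he => mem_symGraph_iff.2 (mem_filter.1 he).2) (hM.mono (filter_subset _ _))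
    have hlost : (M.filter fun e => ¬∃ q ∈ σ, q.1 = pairKey e).card ≤ (I \ σ).card := by
      rw [← card_image_of_injOn (hM.injOn_pairKey.mono (coe_subset.2 (filter_subset _ _))),
        ← card_image_of_injective _ Subtype.val_injective]
      refine card_le_card fun k hk => ?_
      obtain ⟨e, he, rfl⟩ := mem_image.1 hk
      obtain ⟨heM, heσ⟩ := mem_filter.1 he
      obtain ⟨q, hqω, hq⟩ := mem_symGraph_iff.1 (hMω heM)
      exact mem_image.2 ⟨q, mem_sdiff.2 ⟨mem_filter.2 ⟨hqω, hq ▸ mem_image_of_mem _ heM⟩,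
        fun hqσ => heσ ⟨q, hqσ, hq⟩⟩, hq⟩
    have hsplit := card_filter_add_card_filter_not (s := M) fun e => ∃ q ∈ σ, q.1 = pairKey e
    -- the `\` of the goal comes with the classical `DecidableEq` instance
    exact (by omega : BL (symGraph ω) ≤ BL (symGraph σ) + (I \ σ).card).trans_eq
      (by congr; exact Subsingleton.elim _ _)

/-- The symmetric binomial random graph model has concentration constant `1/4`. -/
theorem symmetric_concentration (n : ℕ) (p : ℝ) (hp0 : 0 ≤ p) (hp1 : p ≤ 1)
    (Med : ℝ)
    (hMed : IsMedianW (binomW p : SymOmega n → ℝ) (fun F => (BL (symGraph F) : ℝ)) Med)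
    (s : ℝ) (hs : 0 ≤ s) :
    wProb (binomW p : SymOmega n → ℝ) {F | (BL (symGraph F) : ℝ) ≤ (1 - s) * Med} ≤
      2 * Real.exp (-(s ^ 2 * Med) / 4) ∧
    wProb (binomW p : SymOmega n → ℝ) {F | (1 + s) * Med ≤ (BL (symGraph F) : ℝ)} ≤
      2 * Real.exp (-(s ^ 2 / (1 + s) * Med) / 4) :=
  ⟨(isCertifiable_BL_symGraph n).wProb_le_lower_tail hp0 hp1 hMed hs,
    (isCertifiable_BL_symGraph n).wProb_ge_upper_tail hp0 hp1 hMed hs⟩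
end

section
/- For every n ≥ 1 and 0 < p < 1, the random variables L(S(K_{n,n},p)) and L(O(K_{n,n},p)) are identically distributed. -/
open Finset
open scoped Classical BigOperators

/-- Sort an edge so that its coordinates are increasing. -/
noncomputable def sortEdge {n : ℕ} (e : Fin n × Fin n) : Fin n × Fin n :=
  (min e.1 e.2, max e.1 e.2)

lemma le_BL {n : ℕ} {G M : BG n} (h1 : M ⊆ G) (h2 : BNonCrossing M) : M.card ≤ BL G :=
  Finset.le_sup (by simp [Finset.mem_filter, Finset.mem_powerset, h1, h2])

lemma BL_mono {n : ℕ} {G G' : BG n} (h : G ⊆ G') : BL G ≤ BL G' := by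
  apply Finset.sup_le
  intro M hM
  simp only [Finset.mem_filter, Finset.mem_powerset] at hM
  exact le_BL (hM.1.trans h) hM.2

lemma sortEdge_mem {n : ℕ} {F : SymOmega n} {e : Fin n × Fin n}
    (he : e ∈ symGraph F) : sortEdge e ∈ orientGraph F := by
  simp only [symGraph, Finset.mem_union, Finset.mem_image] at he
  simp only [orientGraph, Finset.mem_image]
  rcases he with ⟨q, hq, rfl⟩ | ⟨q, hq, rfl⟩
  · refine ⟨q, hq, ?_⟩
    have h := q.2
    simp [sortEdge, Prod.ext_iff, min_eq_left h.le, max_eq_right h.le]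
  · refine ⟨q, hq, ?_⟩
    have h := q.2
    simp [sortEdge, Prod.ext_iff, min_eq_right h.le, max_eq_left h.le]

lemma sortEdge_strictMono {n : ℕ} {e f : Fin n × Fin n}
    (h1 : e.1 < f.1) (h2 : e.2 < f.2) :
    (sortEdge e).1 < (sortEdge f).1 ∧ (sortEdge e).2 < (sortEdge f).2 := by
  constructor
  · exact lt_min ((min_le_left _ _).trans_lt h1) ((min_le_right _ _).trans_lt h2)
  · exact max_lt (h1.trans_le (le_max_left _ _)) (h2.trans_le (le_max_right _ _))

lemma BL_sym_eq {n : ℕ} (F : SymOmega n) : BL (symGraph F) = BL (orientGraph F) := by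
  refine le_antisymm ?_ (BL_mono Finset.subset_union_left)
  apply Finset.sup_le
  intro M hM
  simp only [Finset.mem_filter, Finset.mem_powerset] at hM
  obtain ⟨hMG, hNC⟩ := hM
  have hinj : ∀ e ∈ M, ∀ f ∈ M, sortEdge e = sortEdge f → e = f := by
    intro e he f hf hef
    by_contra hne
    rcases hNC e he f hf hne with ⟨h1, h2⟩ | ⟨h1, h2⟩
    · exact absurd (hef ▸ (sortEdge_strictMono h1 h2).1) (lt_irrefl _)
    · exact absurd (hef ▸ (sortEdge_strictMono h1 h2).1) (lt_irrefl _)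
  have hcard : (M.image sortEdge).card = M.card := Finset.card_image_of_injOn hinj
  rw [← hcard]
  apply le_BL
  · intro e' he'
    simp only [Finset.mem_image] at he'
    obtain ⟨e, he, rfl⟩ := he'
    exact sortEdge_mem (hMG he)
  · intro e' he' f' hf' hne
    simp only [Finset.mem_image] at he' hf'
    obtain ⟨e, he, rfl⟩ := he'
    obtain ⟨f, hf, rfl⟩ := hf'
    have hef : e ≠ f := fun h => hne (h ▸ rfl)
    rcases hNC e he f hf hef with ⟨h1, h2⟩ | ⟨h1, h2⟩
    · exact Or.inl (sortEdge_strictMono h1 h2)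
    · exact Or.inr (sortEdge_strictMono h1 h2)

/-- `L(S(K_{n,n},p))` and `L(O(K_{n,n},p))` are identically distributed. -/
theorem symmetric_oriented_same_distribution (n : ℕ) (hn : 1 ≤ n)
    (p : ℝ) (hp0 : 0 < p) (hp1 : p < 1) :
    ∀ c : ℕ,
      wProb (binomW p : SymOmega n → ℝ) {F | BL (symGraph F) = c} =
        wProb (binomW p : SymOmega n → ℝ) {F | BL (orientGraph F) = c} := by
  intro c
  have h : {F : SymOmega n | BL (symGraph F) = c} = {F | BL (orientGraph F) = c} := by
    ext F; simp [BL_sym_eq]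
  rw [wProb, wProb, h]
end
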